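/- Let n ≥ 1 be an integer. Let R : ℝⁿ → {real symmetric n×n matrices} be C^∞ with all partial derivatives of its entries bounded on ℝⁿ, and assume there are constants C₂ > C₁ > 0 with C₁|ξ|² ≤ ⟨R(x)ξ, ξ⟩ ≤ C₂|ξ|² for all x, ξ ∈ ℝⁿ; set r₀(x,ξ) := ⟨R(x)ξ, ξ⟩. Let m : ℝⁿ → ℝ be C^∞ with all partial derivatives bounded, and 0 < m₀ ≤ m(x) ≤ M for all x. Let Z := Z₁ ∪ Z₂ ∪ Z₃, where Z₁ = {z ∈ ℂ : Re z = 1, 0 < |Im z| ≤ 1}, Z₂ = {z ∈ ℂ : Re z = −1, |Im z| ≤ 1}, Z₃ = {z ∈ ℂ : |Re z| ≤ 1, |Im z| = 1}. For every z ∈ Z and every (x,ξ) there is a unique ρ = ρ(x,ξ;z) ∈ ℂ with Im ρ > 0 and ρ² + r₀(x,ξ) = m(x)·z, and (x,ξ) ↦ ρ(x,ξ;z) is C^∞. Fix δ₀ with 0 < δ₀ ≤ 1/(2M). Then for all multi-indices α, β there is a constant C_{α,β} > 0, independent of z, such that for every z ∈ Z: |∂_x^α ∂_ξ^β ρ(x,ξ;z)|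 ≤ C_{α,β} |ρ(x,ξ;z)|^{1−2(|α|+|β|)} at every point with r₀(x,ξ) ≤ 2/δ₀, and |∂_x^α ∂_ξ^β ρ(x,ξ;z)| ≤ C_{α,β} |ρ(x,ξ;z)|^{1−|β|} at every point with r₀(x,ξ) ≥ 1/δ₀. -/

import Mathlib

noncomputable section

/-- Directional derivative of a function on `ℝⁿ × ℝⁿ` along a fixed vector. -/
def dirDeriv {n : ℕ} {E : Type*} [NormedAddCommGroup E] [NormedSpace ℝ E]
    (v : (Fin n → ℝ) × (Fin n → ℝ)) (f : (Fin n → ℝ) × (Fin n → ℝ) → E) :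
    (Fin n → ℝ) × (Fin n → ℝ) → E :=
  fun p => fderiv ℝ f p v

/-- Iterated directional derivatives along a list of vectors; for smooth functions this
realizes the mixed partial derivatives `∂_x^α ∂_ξ^β`. -/
def listDeriv {n : ℕ} {E : Type*} [NormedAddCommGroup E] [NormedSpace ℝ E]
    (L : List ((Fin n → ℝ) × (Fin n → ℝ))) (f : (Fin n → ℝ) × (Fin n → ℝ) → E) :
    (Fin n → ℝ) × (Fin n → ℝ) → E :=
  L.foldr dirDeriv f

/-- The coordinate direction in the `x` variables (for `Sum.inl i`) or in the `ξ`
variables (for `Sum.inr i`). -/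
def dirOf {n : ℕ} : Fin n ⊕ Fin n → (Fin n → ℝ) × (Fin n → ℝ) :=
  Sum.elim (fun i => (Pi.single i 1, 0)) (fun i => (0, Pi.single i 1))

/-- The set `Z = Z₁ ∪ Z₂ ∪ Z₃` of rescaled spectral parameters of the paper. -/
def paramZ : Set ℂ :=
  {z | z.re = 1 ∧ 0 < |z.im| ∧ |z.im| ≤ 1} ∪ {z | z.re = -1 ∧ |z.im| ≤ 1} ∪
    {z | |z.re| ≤ 1 ∧ |z.im| = 1}

section infra

variable {n : ℕ} {E : Type*} [NormedAddCommGroup E] [NormedSpace ℝ E]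

abbrev Vsp (n : ℕ) := (Fin n → ℝ) × (Fin n → ℝ)

lemma listDeriv_nil (f : Vsp n → E) : listDeriv [] f = f := rfl

lemma listDeriv_cons (v : Vsp n) (L : List (Vsp n)) (f : Vsp n → E) :
    listDeriv (v :: L) f = dirDeriv v (listDeriv L f) := rfl

lemma ContDiff.dirDeriv' {f : Vsp n → E} (hf : ContDiff ℝ (⊤ : ℕ∞) f) (v : Vsp n) :
    ContDiff ℝ (⊤ : ℕ∞) (dirDeriv v f) :=
  (hf.fderiv_right (by simp)).clm_apply contDiff_const

lemma ContDiff.listDeriv' {f : Vsp n → E} (hf : ContDiff ℝ (⊤ : ℕ∞) f) (L : List (Vsp n)) :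
    ContDiff ℝ (⊤ : ℕ∞) (listDeriv L f) := by
  induction L with
  | nil => exact hf
  | cons v T ih => exact ih.dirDeriv' v

lemma listDeriv_eq_iteratedFDeriv {f : Vsp n → E} (hf : ContDiff ℝ (⊤ : ℕ∞) f)
    (L : List (Vsp n)) (p : Vsp n) :
    listDeriv L f p = iteratedFDeriv ℝ L.length f p (fun i => L.get i) := by
  induction L generalizing p with
  | nil => simp [listDeriv_nil, iteratedFDeriv_zero_apply]
  | cons v T ih =>
    have hT : listDeriv T f = fun q => iteratedFDeriv ℝ T.length f q (fun i => T.get i) :=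
      funext fun q => ih q
    have hdiff : Differentiable ℝ (iteratedFDeriv ℝ T.length f) :=
      (hf.iteratedFDeriv_right (i := T.length) (m := (⊤ : ℕ∞)) (by exact_mod_cast le_top)).differentiable (by simp)
    have h1 : listDeriv (v :: T) f p
        = fderiv ℝ (fun q => iteratedFDeriv ℝ T.length f q (fun i => T.get i)) p v := by
      rw [listDeriv_cons, dirDeriv, hT]
    have h2 : fderiv ℝ (fun q => iteratedFDeriv ℝ T.length f q (fun i => T.get i)) p
        = (ContinuousMultilinearMap.apply ℝ (fun _ : Fin T.length => Vsp n) E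
            (fun i => T.get i)).comp
            (fderiv ℝ (iteratedFDeriv ℝ T.length f) p) := by
      refine HasFDerivAt.fderiv ?_
      exact ((ContinuousMultilinearMap.apply ℝ (fun _ : Fin T.length => Vsp n) E
        (fun i => T.get i)).hasFDerivAt).comp p (hdiff p).hasFDerivAt
    have h3 := iteratedFDeriv_succ_apply_left (𝕜 := ℝ) (f := f) (x := p) (n := T.length)
      (Fin.cons v (fun i => T.get i))
    simp only [Fin.cons_zero, Fin.tail_cons] at h3
    have h4 : (Fin.cons v (fun i : Fin T.length => T.get i) : Fin (T.length + 1) → Vsp n)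
        = fun i => (v :: T).get i := by
      funext i
      refine Fin.cases ?_ (fun j => ?_) i <;> simp
    rw [h1, h2, ← h4]
    simp only [ContinuousLinearMap.coe_comp', Function.comp_apply,
      ContinuousMultilinearMap.apply_apply]
    rw [← h3]
    rfl


end infra

section infra2

variable {n : ℕ}

lemma norm_dirOf_le (d : Fin n ⊕ Fin n) : ‖dirOf d‖ ≤ 1 := by
  cases d with
  | inl i =>
    simp only [dirOf, Sum.elim_inl, Prod.norm_def]
    simp [Pi.norm_single]
  | inr i =>
    simp only [dirOf, Sum.elim_inr, Prod.norm_def]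
    simp [Pi.norm_single]

lemma norm_listDeriv_le {f : Vsp n → ℂ} (hf : ContDiff ℝ (⊤ : ℕ∞) f)
    (L : List (Vsp n)) (hL : ∀ v ∈ L, ∃ d, v = dirOf d) (p : Vsp n) :
    ‖listDeriv L f p‖ ≤ ‖iteratedFDeriv ℝ L.length f p‖ := by
  rw [listDeriv_eq_iteratedFDeriv hf]
  calc ‖iteratedFDeriv ℝ L.length f p (fun i => L.get i)‖
      ≤ ‖iteratedFDeriv ℝ L.length f p‖ * ∏ i, ‖L.get i‖ :=
        (iteratedFDeriv ℝ L.length f p).le_opNorm _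
    _ ≤ ‖iteratedFDeriv ℝ L.length f p‖ * 1 := by
        refine mul_le_mul_of_nonneg_left ?_ (norm_nonneg _)
        refine Finset.prod_le_one (fun i _ => norm_nonneg _) (fun i _ => ?_)
        obtain ⟨d, hd⟩ := hL (L.get i) (L.get_mem _)
        rw [hd]; exact norm_dirOf_le d
    _ = ‖iteratedFDeriv ℝ L.length f p‖ := mul_one _

lemma dirDeriv_add {f g : Vsp n → ℂ} (hf : ContDiff ℝ (⊤ : ℕ∞) f) (hg : ContDiff ℝ (⊤ : ℕ∞) g)
    (v : Vsp n) :
    dirDeriv v (fun p => f p + g p) = fun p => dirDeriv v f p + dirDeriv v g p := by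
  funext p
  simp only [dirDeriv]
  rw [fderiv_fun_add (hf.differentiable (by simp) p) (hg.differentiable (by simp) p)]
  rfl

lemma dirDeriv_sub {f g : Vsp n → ℂ} (hf : ContDiff ℝ (⊤ : ℕ∞) f) (hg : ContDiff ℝ (⊤ : ℕ∞) g)
    (v : Vsp n) :
    dirDeriv v (fun p => f p - g p) = fun p => dirDeriv v f p - dirDeriv v g p := by
  funext p
  simp only [dirDeriv]
  rw [fderiv_fun_sub (hf.differentiable (by simp) p) (hg.differentiable (by simp) p)]
  rfl

lemma dirDeriv_mul {f g : Vsp n → ℂ} (hf : ContDiff ℝ (⊤ : ℕ∞) f) (hg : ContDiff ℝ (⊤ : ℕ∞) g)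
    (v : Vsp n) :
    dirDeriv v (fun p => f p * g p)
      = fun p => dirDeriv v f p * g p + f p * dirDeriv v g p := by
  funext p
  simp only [dirDeriv]
  rw [fderiv_fun_mul (hf.differentiable (by simp) p) (hg.differentiable (by simp) p)]
  simp [smul_eq_mul]
  ring

lemma dirDeriv_const_mul {f : Vsp n → ℂ} (hf : ContDiff ℝ (⊤ : ℕ∞) f) (c : ℂ) (v : Vsp n) :
    dirDeriv v (fun p => f p * c) = fun p => dirDeriv v f p * c := by
  funext p
  simp only [dirDeriv]
  rw [fderiv_mul_const (hf.differentiable (by simp) p)]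
  simp [smul_eq_mul, mul_comm]

lemma listDeriv_sub {f g : Vsp n → ℂ} (hf : ContDiff ℝ (⊤ : ℕ∞) f) (hg : ContDiff ℝ (⊤ : ℕ∞) g)
    (L : List (Vsp n)) :
    listDeriv L (fun p => f p - g p) = fun p => listDeriv L f p - listDeriv L g p := by
  induction L with
  | nil => rfl
  | cons v T ih =>
    rw [listDeriv_cons, ih, listDeriv_cons, listDeriv_cons,
      dirDeriv_sub (hf.listDeriv' T) (hg.listDeriv' T)]

lemma listDeriv_const_mul {f : Vsp n → ℂ} (hf : ContDiff ℝ (⊤ : ℕ∞) f) (c : ℂ)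
    (L : List (Vsp n)) :
    listDeriv L (fun p => f p * c) = fun p => listDeriv L f p * c := by
  induction L with
  | nil => rfl
  | cons v T ih =>
    rw [listDeriv_cons, ih, listDeriv_cons, dirDeriv_const_mul (hf.listDeriv' T)]

end infra2

section splits

variable {γ : Type*}

def splits : List γ → List (List γ × List γ)
  | [] => [([], [])]
  | v :: L => ((splits L).map fun st => (v :: st.1, st.2))
      ++ ((splits L).map fun st => (st.1, v :: st.2))

lemma splits_length {L : List γ} {st : List γ × List γ} (h : st ∈ splits L) :
    st.1.length + st.2.length = L.length := by
  induction L generalizing st with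
  | nil => simp [splits] at h; simp [h]
  | cons v T ih =>
    simp only [splits, List.mem_append, List.mem_map] at h
    rcases h with ⟨a, ha, rfl⟩ | ⟨a, ha, rfl⟩ <;> have := ih ha <;>
      simp only [List.length_cons] <;> omega

lemma splits_countP (Q : γ → Bool) {L : List γ} {st : List γ × List γ}
    (h : st ∈ splits L) :
    st.1.countP Q + st.2.countP Q = L.countP Q := by
  induction L generalizing st with
  | nil => simp [splits] at h; simp [h]
  | cons v T ih =>
    simp only [splits, List.mem_append, List.mem_map] at h
    rcases h with ⟨a, ha, rfl⟩ | ⟨a, ha, rfl⟩ <;> have := ih ha <;>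
      simp only [List.countP_cons] <;> split <;> omega

lemma splits_mem {L : List γ} {st : List γ × List γ} (h : st ∈ splits L) :
    (∀ x ∈ st.1, x ∈ L) ∧ (∀ x ∈ st.2, x ∈ L) := by
  induction L generalizing st with
  | nil => simp [splits] at h; simp [h]
  | cons v T ih =>
    simp only [splits, List.mem_append, List.mem_map] at h
    rcases h with ⟨a, ha, rfl⟩ | ⟨a, ha, rfl⟩ <;>
      obtain ⟨h1, h2⟩ := ih ha <;> constructor <;> intro x hx <;>
      simp at hx ⊢ <;> tauto

lemma splits_decomp (v : γ) (L : List γ) :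
    ∃ mid : List (List γ × List γ),
      splits (v :: L) = ((v :: L, ([] : List γ)) :: (mid ++ [(([] : List γ), v :: L)]))
      ∧ ∀ st ∈ mid, st.1.length ≤ L.length ∧ st.2.length ≤ L.length := by
  induction L generalizing v with
  | nil =>
    refine ⟨[], ?_, by simp⟩
    simp [splits]
  | cons u T ih =>
    obtain ⟨mid', hmid', hb⟩ := ih u
    refine ⟨(mid'.map fun st => (v :: st.1, st.2)) ++ [(([v] : List γ), u :: T), (u :: T, [v])]
      ++ (mid'.map fun st => (st.1, v :: st.2)), ?_, ?_⟩
    · rw [show splits (v :: u :: T) = ((splits (u :: T)).map fun st => (v :: st.1, st.2))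
        ++ ((splits (u :: T)).map fun st => (st.1, v :: st.2)) from rfl, hmid']
      simp only [List.map_cons, List.map_append, List.map_nil]
      simp
    · intro st hst
      simp only [List.mem_append, List.mem_map, List.mem_singleton, List.mem_cons] at hst
      rcases hst with (⟨a, ha, rfl⟩ | (rfl | (rfl | hsf))) | ⟨a, ha, rfl⟩
      · have := hb a ha; simp only [List.length_cons]; omega
      · simp
      · simp
      · simp at hsf
      · have := hb a ha; simp only [List.length_cons]; omega

end splits

section leibniz

variable {n : ℕ}

lemma contDiff_listSum {α : Type*} (l : List α) (F : α → Vsp n → ℂ)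
    (hF : ∀ a ∈ l, ContDiff ℝ (⊤ : ℕ∞) (F a)) :
    ContDiff ℝ (⊤ : ℕ∞) (fun p => (l.map (fun a => F a p)).sum) := by
  induction l with
  | nil => simpa using contDiff_const
  | cons a t ih =>
    simp only [List.map_cons, List.sum_cons]
    exact (hF a (by simp)).add (ih fun b hb => hF b (by simp [hb]))

lemma dirDeriv_listSum {α : Type*} (l : List α) (F : α → Vsp n → ℂ)
    (hF : ∀ a ∈ l, ContDiff ℝ (⊤ : ℕ∞) (F a)) (v : Vsp n) :
    dirDeriv v (fun p => (l.map (fun a => F a p)).sum)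
      = fun p => (l.map (fun a => dirDeriv v (F a) p)).sum := by
  induction l with
  | nil =>
    funext p
    simp only [List.map_nil, List.sum_nil, dirDeriv]
    rw [show (fun _ : Vsp n => (0 : ℂ)) = fun _ => (0:ℂ) from rfl]
    simp [fderiv_const]
  | cons a t ih =>
    have hta : ∀ b ∈ t, ContDiff ℝ (⊤ : ℕ∞) (F b) := fun b hb => hF b (by simp [hb])
    funext p
    simp only [List.map_cons, List.sum_cons]
    rw [dirDeriv_add (hF a (by simp)) (contDiff_listSum t F hta), ih hta]

lemma listDeriv_mul_eq_splits {f g : Vsp n → ℂ} (hf : ContDiff ℝ (⊤ : ℕ∞) f)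
    (hg : ContDiff ℝ (⊤ : ℕ∞) g) (L : List (Vsp n)) :
    listDeriv L (fun p => f p * g p)
      = fun p => ((splits L).map fun st => listDeriv st.1 f p * listDeriv st.2 g p).sum := by
  induction L with
  | nil => simp [splits, listDeriv_nil]
  | cons v T ih =>
    rw [listDeriv_cons, ih]
    have hsm : ∀ st ∈ splits T,
        ContDiff ℝ (⊤ : ℕ∞) (fun p => listDeriv st.1 f p * listDeriv st.2 g p) := by
      intro st _
      exact (hf.listDeriv' st.1).mul (hg.listDeriv' st.2)
    rw [dirDeriv_listSum (splits T) _ hsm v]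
    funext p
    have hterm : ∀ st ∈ splits T,
        dirDeriv v (fun p => listDeriv st.1 f p * listDeriv st.2 g p) p
          = listDeriv (v :: st.1) f p * listDeriv st.2 g p
            + listDeriv st.1 f p * listDeriv (v :: st.2) g p := by
      intro st _
      rw [dirDeriv_mul (hf.listDeriv' st.1) (hg.listDeriv' st.2)]
      rfl
    rw [List.map_congr_left hterm]
    rw [show splits (v :: T) = ((splits T).map fun st => (v :: st.1, st.2))
        ++ ((splits T).map fun st => (st.1, v :: st.2)) from rfl]
    rw [List.map_append, List.sum_append, List.map_map, List.map_map]
    rw [← List.sum_map_add]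
    rfl

end leibniz

section factors

variable {n : ℕ}

/-- whether a direction vector is a `ξ`-direction (its `x`-component vanishes). -/
def isXi (v : Vsp n) : Bool := decide (v.1 = 0)

lemma isXi_dirOf_inl (i : Fin n) : isXi (dirOf (Sum.inl i) : Vsp n) = false := by
  simp only [isXi, dirOf, Sum.elim_inl, decide_eq_false_iff_not]
  apply decide_eq_false
  intro h
  have := congrFun h i
  simp [Pi.single_apply] at this

lemma isXi_dirOf_inr (i : Fin n) : isXi (dirOf (Sum.inr i) : Vsp n) = true := by
  simp [isXi, dirOf]

lemma exists_uniform_bound {α : Type*} (Φ : ℕ → α → ℝ) (h : ∀ j, ∃ C, ∀ x, Φ j x ≤ C)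
    (k : ℕ) : ∃ C, ∀ j ≤ k, ∀ x, Φ j x ≤ C := by
  induction k with
  | zero =>
    obtain ⟨C, hC⟩ := h 0
    exact ⟨C, by rintro j hj x; interval_cases j; exact hC x⟩
  | succ k ih =>
    obtain ⟨C, hC⟩ := ih
    obtain ⟨C', hC'⟩ := h (k + 1)
    refine ⟨max C C', fun j hj x => ?_⟩
    rcases Nat.lt_succ_iff_lt_or_eq.mp (Nat.lt_succ_of_le hj) with h1 | rfl
    · exact le_trans (hC j (Nat.lt_succ_iff.mp h1) x) (le_max_left _ _)
    · exact le_trans (hC' x) (le_max_right _ _)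

lemma one_le_one_add_norm (ξ : Fin n → ℝ) : (1:ℝ) ≤ 1 + ‖ξ‖ := by
  have := norm_nonneg ξ; linarith

lemma zpow_pos_one_add (ξ : Fin n → ℝ) (e : ℤ) : (0:ℝ) < (1 + ‖ξ‖) ^ e :=
  zpow_pos (lt_of_lt_of_le one_pos (one_le_one_add_norm ξ)) e

lemma zpow_mono_one_add (ξ : Fin n → ℝ) {e e' : ℤ} (h : e ≤ e') :
    (1 + ‖ξ‖ : ℝ) ^ e ≤ (1 + ‖ξ‖) ^ e' :=
  zpow_le_zpow_right₀ (one_le_one_add_norm ξ) h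

/-- Iterated directional derivatives of a function of `x` alone:  bounded, and zero as
soon as one of the directions is a `ξ`-direction. -/
lemma factor_comp_fst {g : (Fin n → ℝ) → ℝ} (hg : ContDiff ℝ (⊤ : ℕ∞) g) {k : ℕ} {Cg : ℝ}
    (hCg : 0 ≤ Cg) (hb : ∀ j ≤ k, ∀ x, ‖iteratedFDeriv ℝ j g x‖ ≤ Cg)
    (L : List (Vsp n)) (hL : ∀ v ∈ L, ∃ d, v = dirOf d) (hlen : L.length ≤ k) (p : Vsp n) :
    ‖listDeriv L (fun p => ((g p.1 : ℝ) : ℂ)) p‖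
      ≤ Cg * (1 + ‖p.2‖) ^ (-(L.countP isXi : ℤ)) := by
  have hgC : ContDiff ℝ (⊤ : ℕ∞) (fun q : Vsp n => ((g q.1 : ℝ) : ℂ)) :=
    Complex.ofRealCLM.contDiff.comp (hg.comp contDiff_fst)
  have hcomp : (fun q : Vsp n => ((g q.1 : ℝ) : ℂ))
      = (Complex.ofRealLI ∘ g) ∘ (ContinuousLinearMap.fst ℝ (Fin n → ℝ) (Fin n → ℝ)) := rfl
  have hsm2 : ContDiff ℝ (⊤ : ℕ∞) (Complex.ofRealLI ∘ g) :=
    Complex.ofRealCLM.contDiff.comp hg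
  have hiter : ∀ q : Vsp n, iteratedFDeriv ℝ L.length (fun q : Vsp n => ((g q.1 : ℝ) : ℂ)) q
      = (iteratedFDeriv ℝ L.length (Complex.ofRealLI ∘ g) q.1).compContinuousLinearMap
          (fun _ => ContinuousLinearMap.fst ℝ (Fin n → ℝ) (Fin n → ℝ)) := by
    intro q
    rw [hcomp]
    exact (ContinuousLinearMap.fst ℝ (Fin n → ℝ) (Fin n → ℝ)).iteratedFDeriv_comp_right
      hsm2 q (by exact_mod_cast le_top)
  by_cases hvan : ∃ v ∈ L, v.1 = 0
  · obtain ⟨v, hvL, hv1⟩ := hvan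
    obtain ⟨i, hi⟩ := List.mem_iff_get.mp hvL
    have hzero : listDeriv L (fun q : Vsp n => ((g q.1 : ℝ) : ℂ)) p = 0 := by
      rw [listDeriv_eq_iteratedFDeriv hgC, hiter p,
        ContinuousMultilinearMap.compContinuousLinearMap_apply]
      refine (iteratedFDeriv ℝ L.length (Complex.ofRealLI ∘ g) p.1).toMultilinearMap.map_coord_zero
        i ?_
      show (L.get i).1 = 0
      rw [hi, hv1]
    rw [hzero, norm_zero]
    positivity
  · have hcount : L.countP isXi = 0 := by
      rw [List.countP_eq_zero]
      intro v hv
      simp only [isXi, decide_eq_true_eq]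
      exact fun h => hvan ⟨v, hv, h⟩
    rw [hcount]
    simp only [Nat.cast_zero, neg_zero, zpow_zero, mul_one]
    calc ‖listDeriv L (fun q : Vsp n => ((g q.1 : ℝ) : ℂ)) p‖
        ≤ ‖iteratedFDeriv ℝ L.length (fun q : Vsp n => ((g q.1 : ℝ) : ℂ)) p‖ :=
          norm_listDeriv_le hgC L hL p
      _ ≤ ‖iteratedFDeriv ℝ L.length (Complex.ofRealLI ∘ g) p.1‖ * ∏ _i : Fin L.length,
            ‖ContinuousLinearMap.fst ℝ (Fin n → ℝ) (Fin n → ℝ)‖ := by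
          rw [hiter p]
          exact ContinuousMultilinearMap.norm_compContinuousLinearMap_le _ _
      _ ≤ ‖iteratedFDeriv ℝ L.length (Complex.ofRealLI ∘ g) p.1‖ * 1 := by
          refine mul_le_mul_of_nonneg_left ?_ (norm_nonneg _)
          exact Finset.prod_le_one (fun _ _ => norm_nonneg _)
            (fun _ _ => ContinuousLinearMap.norm_fst_le ..)
      _ = ‖iteratedFDeriv ℝ L.length g p.1‖ := by
          rw [mul_one]
          exact Complex.ofRealLI.norm_iteratedFDeriv_comp_left hg.contDiffAt (by exact_mod_cast le_top)
      _ ≤ Cg := hb L.length hlen p.1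

lemma dirDeriv_const (z : ℂ) (v : Vsp n) : dirDeriv v (fun _ : Vsp n => z) = fun _ => 0 := by
  funext p
  simp [dirDeriv, fderiv_const]

lemma listDeriv_clm_const (c : Vsp n →L[ℝ] ℂ) (u : Vsp n) (T : List (Vsp n)) :
    ∃ z : ℂ, listDeriv (u :: T) (fun q => c q) = fun _ => z := by
  induction T generalizing u with
  | nil =>
    refine ⟨c u, funext fun p => ?_⟩
    simp only [listDeriv_cons, listDeriv_nil, dirDeriv]
    rw [c.fderiv]
  | cons w T ih =>
    obtain ⟨z, hz⟩ := ih w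
    refine ⟨0, ?_⟩
    rw [listDeriv_cons, hz, dirDeriv_const]

/-- Bound for iterated directional derivatives of the coordinate function `p ↦ p.2 j`. -/
lemma factor_coord (j : Fin n) (L : List (Vsp n)) (hL : ∀ v ∈ L, ∃ d, v = dirOf d)
    (p : Vsp n) :
    ‖listDeriv L (fun q => ((q.2 j : ℝ) : ℂ)) p‖
      ≤ (1 + ‖p.2‖) ^ ((1 : ℤ) - (L.countP isXi : ℤ)) := by
  have hc : (fun q : Vsp n => ((q.2 j : ℝ) : ℂ))
      = fun q => (Complex.ofRealCLM.comp ((ContinuousLinearMap.proj j).comp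
          (ContinuousLinearMap.snd ℝ (Fin n → ℝ) (Fin n → ℝ)))) q := rfl
  set c : Vsp n →L[ℝ] ℂ := Complex.ofRealCLM.comp ((ContinuousLinearMap.proj j).comp
    (ContinuousLinearMap.snd ℝ (Fin n → ℝ) (Fin n → ℝ))) with hcdef
  rw [hc]
  rcases L with _ | ⟨v, _ | ⟨u, T⟩⟩
  · simp only [listDeriv_nil, List.countP_nil, Nat.cast_zero, sub_zero, zpow_one]
    have h1 : ‖c p‖ = |p.2 j| := by
      simp only [hcdef, ContinuousLinearMap.comp_apply, ContinuousLinearMap.coe_snd',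
        ContinuousLinearMap.proj_apply, Complex.ofRealCLM_apply, Complex.norm_real,
        Real.norm_eq_abs]
    rw [h1]
    have := norm_le_pi_norm p.2 j
    rw [Real.norm_eq_abs] at this
    linarith [this, norm_nonneg p.2]
  · obtain ⟨d, rfl⟩ := hL v (by simp)
    have hval : listDeriv [dirOf d] (fun q => c q) p = c (dirOf d) := by
      simp only [listDeriv_cons, listDeriv_nil, dirDeriv]
      rw [c.fderiv]
    rw [hval]
    cases d with
    | inl i =>
      have h0 : c (dirOf (Sum.inl i)) = 0 := by
        simp [hcdef, dirOf]
      rw [h0, norm_zero]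
      positivity
    | inr i =>
      have hcv : ‖c (dirOf (Sum.inr i))‖ ≤ 1 := by
        have h2 : c (dirOf (Sum.inr i)) = (((Pi.single i 1 : Fin n → ℝ) j : ℝ) : ℂ) := by
          simp [hcdef, dirOf]
        rw [h2, Complex.norm_real, Real.norm_eq_abs, Pi.single_apply]
        split <;> simp
      have hcount : ([dirOf (Sum.inr i)] : List (Vsp n)).countP isXi = 1 := by
        simp [List.countP_cons, isXi_dirOf_inr]
      rw [hcount]
      simp only [Nat.cast_one, sub_self, zpow_zero]
      exact hcv
  · obtain ⟨z, hz⟩ := listDeriv_clm_const c u T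
    have h3 : listDeriv (v :: u :: T) (fun q => c q) = fun _ => 0 := by
      rw [listDeriv_cons, hz, dirDeriv_const]
    rw [h3]
    simp only [norm_zero]
    positivity

end factors


section cplx

lemma paramZ_props {z : ℂ} (hz : z ∈ paramZ) :
    |z.re| ≤ 1 ∧ |z.im| ≤ 1 ∧ (z.im = 0 → z.re = -1) := by
  rcases hz with (⟨h1, h2, h3⟩ | ⟨h1, h2⟩) | ⟨h1, h2⟩
  · exact ⟨by rw [h1]; norm_num, h3, fun h => absurd (by rw [h]; simp : |z.im| = 0) (by
      intro h4; rw [h4] at h2; exact lt_irrefl 0 h2)⟩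
  · exact ⟨by rw [h1]; norm_num, h2, fun _ => h1⟩
  · exact ⟨h1, le_of_eq h2, fun h => by rw [h] at h2; simp at h2⟩

lemma paramZ_abs_le {z : ℂ} (hz : z ∈ paramZ) : ‖z‖ ≤ 2 := by
  obtain ⟨h1, h2, _⟩ := paramZ_props hz
  calc ‖z‖ ≤ |z.re| + |z.im| := Complex.norm_le_abs_re_add_abs_im z
    _ ≤ 2 := by linarith

lemma slit_mem {r mv : ℝ} (hr : 0 ≤ r) (hmv : 0 < mv) {z : ℂ} (him : z.im = 0 → z.re = -1) :
    ((r : ℂ) - (mv : ℂ) * z) ∈ Complex.slitPlane := by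
  rcases eq_or_ne z.im 0 with h0 | h0
  · left
    simp only [Complex.sub_re, Complex.ofReal_re, Complex.mul_re, Complex.ofReal_im,
      h0, him h0]
    ring_nf
    positivity
  · right
    simp only [Complex.sub_im, Complex.ofReal_im, Complex.mul_im, Complex.ofReal_re, h0]
    intro hcon
    apply h0
    have : mv * z.im = 0 := by linarith [hcon]
    rcases mul_eq_zero.mp this with h | h
    · exact absurd h (ne_of_gt hmv)
    · exact h

lemma cpow_half_sq {u : ℂ} (hu : u ≠ 0) : (u ^ (1/2 : ℂ)) ^ 2 = u := by
  rw [sq, ← Complex.cpow_add _ _ hu]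
  norm_num

lemma cpow_half_re_pos {u : ℂ} (hu : u ∈ Complex.slitPlane) : 0 < (u ^ (1/2 : ℂ)).re := by
  have hu0 : u ≠ 0 := Complex.slitPlane_ne_zero hu
  rw [Complex.cpow_def_of_ne_zero hu0, Complex.exp_re]
  have harg : (Complex.log u * (1/2 : ℂ)).im = u.arg / 2 := by
    simp [Complex.mul_im, Complex.log_im]
    ring
  rw [harg]
  have h1 : -(Real.pi / 2) < u.arg / 2 := by
    have := Complex.neg_pi_lt_arg u
    linarith
  have h2 : u.arg / 2 < Real.pi / 2 := by
    have : u.arg < Real.pi := by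
      rcases Complex.mem_slitPlane_iff.mp hu with h | h
      · exact Complex.arg_lt_pi_iff.mpr (Or.inl (le_of_lt h))
      · exact Complex.arg_lt_pi_iff.mpr (Or.inr h)
    linarith
  have := Real.cos_pos_of_mem_Ioo ⟨h1, h2⟩
  positivity

/-- The canonical root with positive imaginary part of `ρ² = -u`, for `u` in the slit
plane. -/
noncomputable def posRoot (u : ℂ) : ℂ := Complex.I * u ^ (1/2 : ℂ)

lemma posRoot_im_pos {u : ℂ} (hu : u ∈ Complex.slitPlane) : 0 < (posRoot u).im := by
  have := cpow_half_re_pos hu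
  simp only [posRoot, Complex.mul_im, Complex.I_re, Complex.I_im]
  linarith

lemma posRoot_sq {u : ℂ} (hu : u ∈ Complex.slitPlane) : (posRoot u) ^ 2 = -u := by
  have hu0 : u ≠ 0 := Complex.slitPlane_ne_zero hu
  rw [posRoot, mul_pow, Complex.I_sq, cpow_half_sq hu0, neg_one_mul]

lemma root_unique {ρ₁ ρ₂ : ℂ} (h1 : 0 < ρ₁.im) (h2 : 0 < ρ₂.im) (e : ρ₁ ^ 2 = ρ₂ ^ 2) :
    ρ₁ = ρ₂ := by
  rcases sq_eq_sq_iff_eq_or_eq_neg.mp e with h | h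
  · exact h
  · exfalso
    rw [h] at h1
    simp only [Complex.neg_im] at h1
    linarith

lemma exists_unique_posRoot {u : ℂ} (hu : u ∈ Complex.slitPlane) :
    ∃! ρ : ℂ, 0 < ρ.im ∧ ρ ^ 2 = -u := by
  refine ⟨posRoot u, ⟨posRoot_im_pos hu, posRoot_sq hu⟩, fun ρ hρ => ?_⟩
  exact root_unique hρ.1 (posRoot_im_pos hu) (by rw [hρ.2, posRoot_sq hu])

lemma abs_posRoot_sq {u : ℂ} (hu : u ∈ Complex.slitPlane) :
    (‖(posRoot u)‖) ^ 2 = ‖u‖ := by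
  rw [← norm_pow, posRoot_sq hu, norm_neg]

lemma contDiff_posRoot_comp {n : ℕ} {F : ((Fin n → ℝ) × (Fin n → ℝ)) → ℂ}
    (hF : ContDiff ℝ (⊤ : ℕ∞) F) (hmem : ∀ p, F p ∈ Complex.slitPlane) :
    ContDiff ℝ (⊤ : ℕ∞) (fun p => posRoot (F p)) := by
  unfold posRoot
  apply ContDiff.mul contDiff_const
  rw [contDiff_iff_contDiffAt]
  intro p
  have h1 : AnalyticAt ℂ (fun u : ℂ => u ^ (1/2 : ℂ)) (F p) :=
    (analyticAt_id).cpow analyticAt_const (hmem p)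
  exact (h1.contDiffAt.restrict_scalars ℝ).comp p hF.contDiffAt

end cplx

section helpers

lemma list_norm_sum_le (l : List ℂ) : ‖l.sum‖ ≤ (l.map (fun x => ‖x‖)).sum := by
  induction l with
  | nil => simp
  | cons a t ih =>
    simp only [List.sum_cons, List.map_cons]
    exact le_trans (norm_add_le _ _) (by linarith)

lemma list_sum_le_length_mul {l : List ℝ} {c : ℝ} (h : ∀ x ∈ l, x ≤ c) :
    l.sum ≤ l.length * c := by
  induction l with
  | nil => simp
  | cons a t ih =>
    simp only [List.sum_cons, List.length_cons]
    have h1 := h a (by simp)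
    have h2 := ih (fun x hx => h x (by simp [hx]))
    push_cast
    nlinarith [h1, h2]

lemma splits_len (γ : Type*) (L : List γ) : (splits L).length = 2 ^ L.length := by
  induction L with
  | nil => simp [splits]
  | cons v T ih => simp [splits, ih]; ring

lemma exists_uniform_bound2 {ι α : Type*} [Fintype ι] (Φ : ι → ℕ → α → ℝ)
    (h : ∀ i j, ∃ C, ∀ x, Φ i j x ≤ C) (k : ℕ) :
    ∃ C, 0 ≤ C ∧ ∀ i, ∀ j ≤ k, ∀ x, Φ i j x ≤ C := by
  choose Cf hCf using fun i => exists_uniform_bound (Φ i) (h i) k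
  refine ⟨∑ i, max (Cf i) 0, Finset.sum_nonneg fun i _ => le_max_right _ _, ?_⟩
  intro i j hj x
  calc Φ i j x ≤ Cf i := hCf i j hj x
    _ ≤ max (Cf i) 0 := le_max_left _ _
    _ ≤ ∑ i, max (Cf i) 0 :=
        Finset.single_le_sum (fun i _ => le_max_right (Cf i) 0) (Finset.mem_univ i)

lemma zpow_le_sq_of_le {x B : ℝ} (hx : 1 ≤ x) (hB : x ≤ B) {e : ℤ} (he : e ≤ 2) :
    x ^ e ≤ B ^ 2 := by
  calc x ^ e ≤ x ^ (2 : ℤ) := zpow_le_zpow_right₀ hx he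
    _ = x ^ 2 := by
        rw [show ((2:ℤ)) = ((2:ℕ):ℤ) by norm_num, zpow_natCast]
    _ ≤ B ^ 2 := by nlinarith

lemma one_le_pow_mul_zpow {ρ K : ℝ} (h0 : 0 < ρ) (hρ : ρ ≤ K) (hK : 1 ≤ K)
    {ℓ k : ℕ} (h1 : 1 ≤ ℓ) (hℓ : ℓ ≤ k) :
    (1 : ℝ) ≤ K ^ (2 * k) * ρ ^ ((2 : ℤ) - 2 * ℓ) := by
  have hne : ρ ≠ 0 := ne_of_gt h0
  have key : ρ ^ ((2 * ℓ - 2 : ℕ) : ℤ) ≤ K ^ (2 * k) := by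
    rw [zpow_natCast]
    calc ρ ^ (2 * ℓ - 2) ≤ K ^ (2 * ℓ - 2) := pow_le_pow_left₀ (le_of_lt h0) hρ _
      _ ≤ K ^ (2 * k) := pow_le_pow_right₀ hK (by omega)
  have hid : ((2 * ℓ - 2 : ℕ) : ℤ) = 2 * ℓ - 2 := by push_cast; omega
  have hsplit : (1 : ℝ) = ρ ^ ((2 * ℓ - 2 : ℕ) : ℤ) * ρ ^ ((2 : ℤ) - 2 * ℓ) := by
    rw [← zpow_add₀ hne, hid]
    norm_num
  rw [hsplit]
  exact mul_le_mul_of_nonneg_right key (le_of_lt (zpow_pos h0 _))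

lemma zpow_le_pow_mul_zpow {a b K : ℝ} (ha : 0 < a) (hb : 0 < b) (hK : 1 ≤ K)
    (h1 : a ≤ K * b) (h2 : b ≤ K * a) {e : ℤ} {N : ℕ} (he : e.natAbs ≤ N) :
    a ^ e ≤ K ^ N * b ^ e := by
  have hK0 : (0:ℝ) < K := lt_of_lt_of_le one_pos hK
  obtain ⟨q, rfl | rfl⟩ := e.eq_nat_or_neg
  · have hq : q ≤ N := by simpa using he
    calc a ^ (q : ℤ) = a ^ q := zpow_natCast a q
      _ ≤ (K * b) ^ q := pow_le_pow_left₀ (le_of_lt ha) h1 q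
      _ = K ^ q * b ^ q := mul_pow K b q
      _ ≤ K ^ N * b ^ q := by
          have := pow_le_pow_right₀ hK hq
          nlinarith [pow_pos hb q, pow_pos hK0 q]
      _ = K ^ N * b ^ (q : ℤ) := by rw [zpow_natCast]
  · have hq : q ≤ N := by simpa using he
    have hbq : b ^ q ≤ K ^ q * a ^ q := by
      calc b ^ q ≤ (K * a) ^ q := pow_le_pow_left₀ (le_of_lt hb) h2 q
        _ = K ^ q * a ^ q := mul_pow K a q
    have ha' : (0:ℝ) < a ^ q := pow_pos ha q
    have hb' : (0:ℝ) < b ^ q := pow_pos hb q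
    rw [zpow_neg, zpow_neg, zpow_natCast, zpow_natCast]
    have t1 : (K ^ q * a ^ q)⁻¹ ≤ (b ^ q)⁻¹ := by
      apply inv_anti₀ hb' hbq
    have t2 : (a ^ q)⁻¹ = K ^ q * (K ^ q * a ^ q)⁻¹ := by
      field_simp
    calc (a ^ q)⁻¹ = K ^ q * (K ^ q * a ^ q)⁻¹ := t2
      _ ≤ K ^ q * (b ^ q)⁻¹ := mul_le_mul_of_nonneg_left t1 (by positivity)
      _ ≤ K ^ N * (b ^ q)⁻¹ := by
          have := pow_le_pow_right₀ hK hq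
          nlinarith [inv_pos.mpr hb']

lemma countP_left_right {γ δ : Type*} (L : List (γ ⊕ δ)) :
    L.countP Sum.isLeft + L.countP Sum.isRight = L.length := by
  induction L with
  | nil => simp
  | cons v T ih =>
    simp only [List.countP_cons, List.length_cons]
    cases v <;> simp <;> omega

end helpers

section wbound

variable {n : ℕ}

lemma dirDeriv_finsetSum {ι : Type*} (s : Finset ι) (F : ι → Vsp n → ℂ)
    (hF : ∀ i ∈ s, ContDiff ℝ (⊤ : ℕ∞) (F i)) (v : Vsp n) :
    dirDeriv v (fun p => ∑ i ∈ s, F i p) = fun p => ∑ i ∈ s, dirDeriv v (F i) p := by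
  funext p
  simp only [dirDeriv]
  rw [fderiv_fun_sum (fun i hi => (hF i hi).differentiable (by simp) p)]
  simp [ContinuousLinearMap.sum_apply]

lemma listDeriv_finsetSum {ι : Type*} (s : Finset ι) (F : ι → Vsp n → ℂ)
    (hF : ∀ i ∈ s, ContDiff ℝ (⊤ : ℕ∞) (F i)) (L : List (Vsp n)) :
    listDeriv L (fun p => ∑ i ∈ s, F i p) = fun p => ∑ i ∈ s, listDeriv L (F i) p := by
  induction L with
  | nil => rfl
  | cons v T ih =>
    rw [listDeriv_cons, ih, dirDeriv_finsetSum s _ (fun i hi => (hF i hi).listDeriv' T) v]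
    rfl

lemma norm_list_map_sum_le {α : Type*} (l : List α) (F : α → ℂ) {c : ℝ}
    (h : ∀ a ∈ l, ‖F a‖ ≤ c) : ‖(l.map F).sum‖ ≤ l.length * c := by
  calc ‖(l.map F).sum‖ ≤ ((l.map F).map (fun x => ‖x‖)).sum := list_norm_sum_le _
    _ = (l.map (fun a => ‖F a‖)).sum := by rw [List.map_map]; rfl
    _ ≤ (l.map (fun a => ‖F a‖)).length * c := by
        apply list_sum_le_length_mul
        intro x hx
        obtain ⟨a, ha, rfl⟩ := List.mem_map.mp hx
        exact h a ha
    _ = l.length * c := by rw [List.length_map]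

lemma wBound (R : (Fin n → ℝ) → Matrix (Fin n) (Fin n) ℝ)
    (hRsmooth : ∀ i j, ContDiff ℝ (⊤ : ℕ∞) fun x => R x i j)
    (hRbdd : ∀ i j, ∀ k : ℕ, ∃ C : ℝ, ∀ x,
      ‖iteratedFDeriv ℝ k (fun x => R x i j) x‖ ≤ C)
    (m : (Fin n → ℝ) → ℝ) (hmsmooth : ContDiff ℝ (⊤ : ℕ∞) m)
    (hmbdd : ∀ k : ℕ, ∃ C : ℝ, ∀ x, ‖iteratedFDeriv ℝ k m x‖ ≤ C) (k : ℕ) :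
    ∃ C : ℝ, 0 < C ∧ ∀ z : ℂ, ‖z‖ ≤ 2 → ∀ L : List (Vsp n),
      (∀ v ∈ L, ∃ d, v = dirOf d) → L.length ≤ k → ∀ p : Vsp n,
      ‖listDeriv L (fun q => (m q.1 : ℂ) * z
          - ∑ i, ∑ j, ((R q.1 i j : ℂ) * (q.2 i : ℂ) * (q.2 j : ℂ))) p‖
        ≤ C * (1 + ‖p.2‖) ^ ((2:ℤ) - (L.countP isXi : ℤ)) := by
  obtain ⟨Cm0, hCm0⟩ := exists_uniform_bound (fun j x => ‖iteratedFDeriv ℝ j m x‖) hmbdd k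
  set Cm : ℝ := max Cm0 0 with hCmdef
  have hCm : ∀ j ≤ k, ∀ x, ‖iteratedFDeriv ℝ j m x‖ ≤ Cm :=
    fun j hj x => le_trans (hCm0 j hj x) (le_max_left _ _)
  have hCmnn : 0 ≤ Cm := le_max_right _ _
  obtain ⟨CR, hCRnn, hCR⟩ := exists_uniform_bound2
    (fun (ij : Fin n × Fin n) j x => ‖iteratedFDeriv ℝ j (fun x => R x ij.1 ij.2) x‖)
    (fun ij j => hRbdd ij.1 ij.2 j) k
  -- smoothness facts
  have hmC : ContDiff ℝ (⊤ : ℕ∞) (fun q : Vsp n => (m q.1 : ℂ)) :=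
    Complex.ofRealCLM.contDiff.comp (hmsmooth.comp contDiff_fst)
  have hA : ∀ i j, ContDiff ℝ (⊤ : ℕ∞) (fun q : Vsp n => (R q.1 i j : ℂ)) := fun i j =>
    Complex.ofRealCLM.contDiff.comp ((hRsmooth i j).comp contDiff_fst)
  have hB : ∀ i, ContDiff ℝ (⊤ : ℕ∞) (fun q : Vsp n => (q.2 i : ℂ)) := fun i =>
    (Complex.ofRealCLM.comp ((ContinuousLinearMap.proj i).comp
      (ContinuousLinearMap.snd ℝ (Fin n → ℝ) (Fin n → ℝ)))).contDiff
  have hterm : ∀ (i j : Fin n), ContDiff ℝ (⊤ : ℕ∞)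
      (fun q : Vsp n => (R q.1 i j : ℂ) * (q.2 i : ℂ) * (q.2 j : ℂ)) := fun i j =>
    ((hA i j).mul (hB i)).mul (hB j)
  have hinner : ∀ i : Fin n, ContDiff ℝ (⊤ : ℕ∞)
      (fun q : Vsp n => ∑ j, (R q.1 i j : ℂ) * (q.2 i : ℂ) * (q.2 j : ℂ)) := fun i =>
    ContDiff.sum (fun j _ => hterm i j)
  have hsum : ContDiff ℝ (⊤ : ℕ∞)
      (fun q : Vsp n => ∑ i, ∑ j, (R q.1 i j : ℂ) * (q.2 i : ℂ) * (q.2 j : ℂ)) :=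
    ContDiff.sum (fun i _ => hinner i)
  refine ⟨2 * Cm + (n : ℝ)^2 * 4 ^ k * CR + 1, by positivity, ?_⟩
  intro z hz L hL hlen p
  set c : ℤ := (L.countP isXi : ℤ) with hcdef
  have hbase : (0:ℝ) < 1 + ‖p.2‖ := lt_of_lt_of_le one_pos (one_le_one_add_norm p.2)
  have hbasene : (1 + ‖p.2‖ : ℝ) ≠ 0 := ne_of_gt hbase
  -- split off the difference
  have hsplit := listDeriv_sub (f := fun q : Vsp n => (m q.1 : ℂ) * z)
    (g := fun q : Vsp n => ∑ i, ∑ j, (R q.1 i j : ℂ) * (q.2 i : ℂ) * (q.2 j : ℂ))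
    (hmC.mul contDiff_const) hsum L
  rw [show (fun q : Vsp n => (m q.1 : ℂ) * z
      - ∑ i, ∑ j, (R q.1 i j : ℂ) * (q.2 i : ℂ) * (q.2 j : ℂ))
      = (fun q : Vsp n => ((fun q : Vsp n => (m q.1 : ℂ) * z) q
        - (fun q : Vsp n => ∑ i, ∑ j, (R q.1 i j : ℂ) * (q.2 i : ℂ) * (q.2 j : ℂ)) q)) from rfl,
    hsplit]
  -- part A bound
  have hpartA : ‖listDeriv L (fun q : Vsp n => (m q.1 : ℂ) * z) p‖
      ≤ 2 * Cm * (1 + ‖p.2‖) ^ ((2:ℤ) - c) := by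
    rw [listDeriv_const_mul hmC z L]
    rw [norm_mul]
    have h1 := factor_comp_fst hmsmooth hCmnn hCm L hL hlen p
    have h2 : ‖z‖ ≤ 2 := hz
    calc ‖listDeriv L (fun q : Vsp n => (m q.1 : ℂ)) p‖ * ‖z‖
        ≤ (Cm * (1 + ‖p.2‖) ^ (-(L.countP isXi : ℤ))) * 2 := by
          apply mul_le_mul h1 h2 (norm_nonneg _)
          positivity
      _ = 2 * Cm * (1 + ‖p.2‖) ^ (-c) := by ring
      _ ≤ 2 * Cm * (1 + ‖p.2‖) ^ ((2:ℤ) - c) := by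
          apply mul_le_mul_of_nonneg_left (zpow_mono_one_add p.2 (by omega)) (by positivity)
  -- part B bound
  have hpartB : ‖listDeriv L
      (fun q : Vsp n => ∑ i, ∑ j, (R q.1 i j : ℂ) * (q.2 i : ℂ) * (q.2 j : ℂ)) p‖
      ≤ (n : ℝ)^2 * 4 ^ k * CR * (1 + ‖p.2‖) ^ ((2:ℤ) - c) := by
    -- per-term bound
    have hperm : ∀ (i j : Fin n),
        ‖listDeriv L (fun q : Vsp n => (R q.1 i j : ℂ) * (q.2 i : ℂ) * (q.2 j : ℂ)) p‖
          ≤ 4 ^ k * CR * (1 + ‖p.2‖) ^ ((2:ℤ) - c) := by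
      intro i j
      have hsplits := listDeriv_mul_eq_splits (f := fun q : Vsp n => (R q.1 i j : ℂ) * (q.2 i : ℂ))
        (g := fun q : Vsp n => (q.2 j : ℂ)) ((hA i j).mul (hB i)) (hB j) L
      rw [show (fun q : Vsp n => (R q.1 i j : ℂ) * (q.2 i : ℂ) * (q.2 j : ℂ))
        = (fun q : Vsp n => ((fun q : Vsp n => (R q.1 i j : ℂ) * (q.2 i : ℂ)) q
          * (fun q : Vsp n => (q.2 j : ℂ)) q)) from rfl, hsplits]
      have hstterm : ∀ st ∈ splits L,
          ‖listDeriv st.1 (fun q : Vsp n => (R q.1 i j : ℂ) * (q.2 i : ℂ)) p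
            * listDeriv st.2 (fun q : Vsp n => (q.2 j : ℂ)) p‖
          ≤ (2^k * CR) * (1 + ‖p.2‖) ^ ((2:ℤ) - c) := by
        intro st hst
        have hmem := splits_mem hst
        have hlen1 := splits_length hst
        have hcount1 := splits_countP isXi hst
        have hm1 : ∀ v ∈ st.1, ∃ d, v = dirOf d := fun v hv => hL v (hmem.1 v hv)
        have hm2 : ∀ v ∈ st.2, ∃ d, v = dirOf d := fun v hv => hL v (hmem.2 v hv)
        -- inner split of st.1
        have hsplits2 := listDeriv_mul_eq_splits (f := fun q : Vsp n => (R q.1 i j : ℂ))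
          (g := fun q : Vsp n => (q.2 i : ℂ)) (hA i j) (hB i) st.1
        have hinner1 : ‖listDeriv st.1 (fun q : Vsp n => (R q.1 i j : ℂ) * (q.2 i : ℂ)) p‖
            ≤ 2^k * CR * (1 + ‖p.2‖) ^ ((1:ℤ) - (st.1.countP isXi : ℤ)) := by
          rw [show (fun q : Vsp n => (R q.1 i j : ℂ) * (q.2 i : ℂ))
            = (fun q : Vsp n => ((fun q : Vsp n => (R q.1 i j : ℂ)) q
              * (fun q : Vsp n => (q.2 i : ℂ)) q)) from rfl, hsplits2]
          have huv : ∀ uv ∈ splits st.1,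
              ‖listDeriv uv.1 (fun q : Vsp n => (R q.1 i j : ℂ)) p
                * listDeriv uv.2 (fun q : Vsp n => (q.2 i : ℂ)) p‖
              ≤ CR * (1 + ‖p.2‖) ^ ((1:ℤ) - (st.1.countP isXi : ℤ)) := by
            intro uv huv
            have hmem2 := splits_mem huv
            have hlen2 := splits_length huv
            have hcount2 := splits_countP isXi huv
            rw [norm_mul]
            have e1 := factor_comp_fst (hRsmooth i j) hCRnn
              (fun jj hjj x => hCR (i, j) jj hjj x) uv.1
              (fun v hv => hm1 v (hmem2.1 v hv)) (by omega) p
            have e2 := factor_coord i uv.2 (fun v hv => hm1 v (hmem2.2 v hv)) p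
            calc ‖listDeriv uv.1 (fun q : Vsp n => (R q.1 i j : ℂ)) p‖
                  * ‖listDeriv uv.2 (fun q : Vsp n => (q.2 i : ℂ)) p‖
                ≤ (CR * (1 + ‖p.2‖) ^ (-(uv.1.countP isXi : ℤ)))
                  * ((1 + ‖p.2‖) ^ ((1:ℤ) - (uv.2.countP isXi : ℤ))) := by
                  apply mul_le_mul e1 e2 (norm_nonneg _)
                  positivity
              _ = CR * (1 + ‖p.2‖) ^ ((-(uv.1.countP isXi : ℤ))
                    + ((1:ℤ) - (uv.2.countP isXi : ℤ))) := by
                  rw [zpow_add₀ hbasene]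
                  ring
              _ = CR * (1 + ‖p.2‖) ^ ((1:ℤ) - (st.1.countP isXi : ℤ)) := by
                  have hexp : (-(uv.1.countP isXi : ℤ)) + ((1:ℤ) - (uv.2.countP isXi : ℤ))
                      = (1:ℤ) - (st.1.countP isXi : ℤ) := by omega
                  rw [hexp]
          calc ‖((splits st.1).map (fun uv =>
                listDeriv uv.1 (fun q : Vsp n => (R q.1 i j : ℂ)) p
                * listDeriv uv.2 (fun q : Vsp n => (q.2 i : ℂ)) p)).sum‖
              ≤ (splits st.1).length * (CR * (1 + ‖p.2‖) ^ ((1:ℤ) - (st.1.countP isXi : ℤ))) :=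
                norm_list_map_sum_le _ _ huv
            _ ≤ 2^k * (CR * (1 + ‖p.2‖) ^ ((1:ℤ) - (st.1.countP isXi : ℤ))) := by
                apply mul_le_mul_of_nonneg_right _ (by positivity)
                rw [splits_len]
                have : (2:ℝ)^st.1.length ≤ 2^k := by
                  apply pow_le_pow_right₀ (by norm_num)
                  omega
                exact_mod_cast this
            _ = 2^k * CR * (1 + ‖p.2‖) ^ ((1:ℤ) - (st.1.countP isXi : ℤ)) := by ring
        have hinner2 : ‖listDeriv st.2 (fun q : Vsp n => (q.2 j : ℂ)) p‖
            ≤ (1 + ‖p.2‖) ^ ((1:ℤ) - (st.2.countP isXi : ℤ)) := factor_coord j st.2 hm2 p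
        rw [norm_mul]
        calc ‖listDeriv st.1 (fun q : Vsp n => (R q.1 i j : ℂ) * (q.2 i : ℂ)) p‖
              * ‖listDeriv st.2 (fun q : Vsp n => (q.2 j : ℂ)) p‖
            ≤ (2^k * CR * (1 + ‖p.2‖) ^ ((1:ℤ) - (st.1.countP isXi : ℤ)))
              * ((1 + ‖p.2‖) ^ ((1:ℤ) - (st.2.countP isXi : ℤ))) := by
              apply mul_le_mul hinner1 hinner2 (norm_nonneg _)
              positivity
          _ = 2^k * CR * (1 + ‖p.2‖) ^ (((1:ℤ) - (st.1.countP isXi : ℤ))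
                + ((1:ℤ) - (st.2.countP isXi : ℤ))) := by
              rw [zpow_add₀ hbasene]
              ring
          _ = (2^k * CR) * (1 + ‖p.2‖) ^ ((2:ℤ) - c) := by
              have hexp : ((1:ℤ) - (st.1.countP isXi : ℤ)) + ((1:ℤ) - (st.2.countP isXi : ℤ))
                  = (2:ℤ) - c := by omega
              rw [hexp]
      calc ‖((splits L).map (fun st =>
            listDeriv st.1 (fun q : Vsp n => (R q.1 i j : ℂ) * (q.2 i : ℂ)) p
            * listDeriv st.2 (fun q : Vsp n => (q.2 j : ℂ)) p)).sum‖
          ≤ (splits L).length * ((2^k * CR) * (1 + ‖p.2‖) ^ ((2:ℤ) - c)) :=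
            norm_list_map_sum_le _ _ hstterm
        _ ≤ 2^k * ((2^k * CR) * (1 + ‖p.2‖) ^ ((2:ℤ) - c)) := by
            apply mul_le_mul_of_nonneg_right _ (by positivity)
            rw [splits_len]
            have : (2:ℝ)^L.length ≤ 2^k := by
              apply pow_le_pow_right₀ (by norm_num)
              omega
            exact_mod_cast this
        _ = 4 ^ k * CR * (1 + ‖p.2‖) ^ ((2:ℤ) - c) := by
            rw [show (4:ℝ)^k = 2^k * 2^k by rw [← mul_pow]; norm_num]
            ring
    rw [listDeriv_finsetSum Finset.univ _ (fun i _ => hinner i) L]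
    have h1 : ∀ i : Fin n, ‖listDeriv L
        (fun q : Vsp n => ∑ j, (R q.1 i j : ℂ) * (q.2 i : ℂ) * (q.2 j : ℂ)) p‖
        ≤ (n:ℝ) * (4 ^ k * CR * (1 + ‖p.2‖) ^ ((2:ℤ) - c)) := by
      intro i
      rw [listDeriv_finsetSum Finset.univ _ (fun j _ => hterm i j) L]
      calc ‖∑ j, listDeriv L (fun q : Vsp n => (R q.1 i j : ℂ) * (q.2 i : ℂ) * (q.2 j : ℂ)) p‖
          ≤ ∑ j, ‖listDeriv L (fun q : Vsp n => (R q.1 i j : ℂ) * (q.2 i : ℂ) * (q.2 j : ℂ)) p‖ :=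
            norm_sum_le _ _
        _ ≤ ∑ _j : Fin n, (4 ^ k * CR * (1 + ‖p.2‖) ^ ((2:ℤ) - c)) :=
            Finset.sum_le_sum (fun j _ => hperm i j)
        _ = (n:ℝ) * (4 ^ k * CR * (1 + ‖p.2‖) ^ ((2:ℤ) - c)) := by
            rw [Finset.sum_const, Finset.card_univ, Fintype.card_fin]
            simp [nsmul_eq_mul]
    calc ‖∑ i, listDeriv L
          (fun q : Vsp n => ∑ j, (R q.1 i j : ℂ) * (q.2 i : ℂ) * (q.2 j : ℂ)) p‖
        ≤ ∑ i, ‖listDeriv L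
          (fun q : Vsp n => ∑ j, (R q.1 i j : ℂ) * (q.2 i : ℂ) * (q.2 j : ℂ)) p‖ :=
          norm_sum_le _ _
      _ ≤ ∑ _i : Fin n, (n:ℝ) * (4 ^ k * CR * (1 + ‖p.2‖) ^ ((2:ℤ) - c)) :=
          Finset.sum_le_sum (fun i _ => h1 i)
      _ = (n:ℝ)^2 * 4 ^ k * CR * (1 + ‖p.2‖) ^ ((2:ℤ) - c) := by
          rw [Finset.sum_const, Finset.card_univ, Fintype.card_fin]
          simp [nsmul_eq_mul]
          ring
  calc ‖listDeriv L (fun q : Vsp n => (m q.1 : ℂ) * z) p - listDeriv L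
        (fun q : Vsp n => ∑ i, ∑ j, (R q.1 i j : ℂ) * (q.2 i : ℂ) * (q.2 j : ℂ)) p‖
      ≤ ‖listDeriv L (fun q : Vsp n => (m q.1 : ℂ) * z) p‖ + ‖listDeriv L
        (fun q : Vsp n => ∑ i, ∑ j, (R q.1 i j : ℂ) * (q.2 i : ℂ) * (q.2 j : ℂ)) p‖ :=
        norm_sub_le _ _
    _ ≤ 2 * Cm * (1 + ‖p.2‖) ^ ((2:ℤ) - c)
        + (n : ℝ)^2 * 4 ^ k * CR * (1 + ‖p.2‖) ^ ((2:ℤ) - c) := add_le_add hpartA hpartB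
    _ ≤ (2 * Cm + (n : ℝ)^2 * 4 ^ k * CR + 1) * (1 + ‖p.2‖) ^ ((2:ℤ) - c) := by
        have := zpow_pos_one_add p.2 ((2:ℤ) - c)
        nlinarith

end wbound

section morehelp

lemma sqrt_compare {a b : ℝ} (ha : 0 ≤ a) (hb : 0 ≤ b) (h : a^2 ≤ b^2) : a ≤ b := by
  nlinarith

lemma div_step {r X D : ℝ} (hr : 0 < r) {e : ℤ} (h : 2*r*X ≤ D * r^e) (hX : 0 ≤ X) :
    X ≤ (D/2) * r^(e-1) := by
  have h2 : r^e = r * r^(e-1) := by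
    rw [← zpow_one_add₀ (ne_of_gt hr)]
    norm_num
  have hpos : (0:ℝ) < 2*r := by positivity
  rw [← mul_le_mul_iff_right₀ hpos]
  calc 2*r*X ≤ D * r^e := h
    _ = 2*r*((D/2) * r^(e-1)) := by rw [h2]; ring

lemma norm_sq_le_sum {n : ℕ} (ξ : Fin n → ℝ) : ‖ξ‖^2 ≤ ∑ i, ξ i ^2 := by
  have hs : (0:ℝ) ≤ ∑ i, ξ i ^2 := Finset.sum_nonneg fun i _ => sq_nonneg _
  have h1 : ‖ξ‖ ≤ Real.sqrt (∑ i, ξ i ^2) := by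
    apply pi_norm_le_iff_of_nonneg (Real.sqrt_nonneg _) |>.mpr
    intro i
    rw [Real.norm_eq_abs, ← Real.sqrt_sq_eq_abs]
    apply Real.sqrt_le_sqrt
    exact Finset.single_le_sum (fun j _ => sq_nonneg (ξ j)) (Finset.mem_univ i)
  calc ‖ξ‖^2 ≤ Real.sqrt (∑ i, ξ i ^2)^2 := by
        apply pow_le_pow_left₀ (norm_nonneg _) h1
    _ = ∑ i, ξ i ^2 := Real.sq_sqrt hs
  
lemma sum_le_norm_sq {n : ℕ} (ξ : Fin n → ℝ) : ∑ i, ξ i ^2 ≤ (n:ℝ) * ‖ξ‖^2 := by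
  calc ∑ i, ξ i ^2 ≤ ∑ _i : Fin n, ‖ξ‖^2 := by
        apply Finset.sum_le_sum
        intro i _
        have h := norm_le_pi_norm ξ i
        rw [Real.norm_eq_abs] at h
        have h2 : |ξ i|^2 ≤ ‖ξ‖^2 := by nlinarith [abs_nonneg (ξ i)]
        rw [sq_abs] at h2
        exact h2
    _ = (n:ℝ) * ‖ξ‖^2 := by
        rw [Finset.sum_const, Finset.card_univ, Fintype.card_fin]
        simp [nsmul_eq_mul]

end morehelp

section reg2help

lemma step_a {δ₀ r ρ2 : ℝ} (hδ₀ : 0 < δ₀) (h1 : 1/δ₀ ≤ r) (h2 : r/2 ≤ ρ2) :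
    1 ≤ 2*δ₀*ρ2 := by
  rw [div_le_iff₀ hδ₀] at h1
  nlinarith

lemma reg2_lower {δ₀ C₁ S q ρ2 : ℝ} (hδ₀ : 0 < δ₀) (hC₁ : 0 < C₁) (hS : 0 ≤ S) (hq : 0 ≤ q)
    (hq2 : q^2 ≤ S) (h2 : 1 ≤ 2*δ₀*ρ2) (h3 : C₁*S ≤ 2*ρ2) :
    (1+q)^2 ≤ (8*δ₀ + 8/C₁) * ρ2 := by
  have e1 : (2:ℝ) ≤ 8*δ₀*ρ2 := by nlinarith
  have e2 : 2*S ≤ (8/C₁)*ρ2 := by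
    rw [div_mul_eq_mul_div, le_div_iff₀ hC₁]
    nlinarith
  nlinarith

lemma reg2_upper {C₂ nr S q ρ2 : ℝ} (hC₂ : 0 < C₂) (hnr : 0 < nr) (hS : 0 ≤ S) (hq : 0 ≤ q)
    (hSn : S ≤ nr * q^2) (h1 : ρ2 ≤ 2*(C₂*S)) : ρ2 ≤ (2*C₂*nr)*(1+q)^2 := by
  have e1 : C₂*S ≤ C₂*(nr*q^2) := mul_le_mul_of_nonneg_left hSn (le_of_lt hC₂)
  have e2 : q^2 ≤ (1+q)^2 := by nlinarith
  nlinarith [mul_le_mul_of_nonneg_left e2 (by positivity : (0:ℝ) ≤ C₂*nr)]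

lemma sum_le_n_one_add {S nr q : ℝ} (hnr : 0 ≤ nr) (hq : 0 ≤ q) (h : S ≤ nr * q^2) :
    S ≤ nr * (1+q)^2 := by
  nlinarith

lemma two_halves {x y : ℝ} (h : x/2 ≤ y) : x ≤ 2*y := by linarith

lemma sq_mul_compare {A K x y : ℝ} (hA : 0 ≤ A) (hK : 0 ≤ K) (hx : 0 ≤ x) (hy : 0 ≤ y)
    (hAK : Real.sqrt A ≤ K) (h : x^2 ≤ A * y^2) : x ≤ K * y := by
  have hsq : (Real.sqrt A)^2 = A := Real.sq_sqrt hA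
  apply sqrt_compare hx (by positivity)
  calc x^2 ≤ A * y^2 := h
    _ = (Real.sqrt A)^2 * y^2 := by rw [hsq]
    _ ≤ K^2 * y^2 := by
        have hA2 : A ≤ K^2 := by nlinarith [Real.sqrt_nonneg A, Real.sq_sqrt hA]
        nlinarith [mul_nonneg (sub_nonneg.mpr hA2) (sq_nonneg y)]
    _ = (K*y)^2 := by ring

end reg2help

set_option maxHeartbeats 1000000

/-- Local-coordinate version of Lemma 3.2, estimates (3.5) and (3.6), of the paper:
`ρ(x,ξ;z)` is the root with positive imaginary part of `ρ² + r₀(x,ξ) = m(x) z`, where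
`r₀(x,ξ) = ⟨R(x)ξ,ξ⟩` is elliptic with `R` symmetric, smooth with bounded derivatives,
and `m` is smooth with bounded derivatives, `0 < m₀ ≤ m ≤ M`. Such a root exists,
is unique, depends smoothly on `(x,ξ)`, and satisfies for all multi-indices `α, β`
(here encoded as lists of coordinate directions, `a = |α|` directions in `x` and
`b = |β|` directions in `ξ`) the bounds `|∂_x^α ∂_ξ^β ρ| ≤ C |ρ|^{1−2(|α|+|β|)}` where
`r₀ ≤ 2/δ₀` and `|∂_x^α ∂_ξ^β ρ| ≤ C |ρ|^{1−|β|}` where `r₀ ≥ 1/δ₀`, with `C`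
independent of `z ∈ Z`. -/
theorem stmt_4 (n : ℕ) (hn : 1 ≤ n)
    (R : (Fin n → ℝ) → Matrix (Fin n) (Fin n) ℝ)
    (hRsym : ∀ x, (R x).IsSymm)
    (hRsmooth : ∀ i j, ContDiff ℝ (⊤ : ℕ∞) fun x => R x i j)
    (hRbdd : ∀ i j, ∀ k : ℕ, ∃ C : ℝ, ∀ x,
      ‖iteratedFDeriv ℝ k (fun x => R x i j) x‖ ≤ C)
    (C₁ C₂ : ℝ) (hC₁ : 0 < C₁) (hC₁₂ : C₁ < C₂)
    (hell : ∀ (x ξ : Fin n → ℝ), C₁ * (∑ i, ξ i ^ 2) ≤ ∑ i, ∑ j, R x i j * ξ i * ξ j ∧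
      ∑ i, ∑ j, R x i j * ξ i * ξ j ≤ C₂ * ∑ i, ξ i ^ 2)
    (m : (Fin n → ℝ) → ℝ) (hmsmooth : ContDiff ℝ (⊤ : ℕ∞) m)
    (hmbdd : ∀ k : ℕ, ∃ C : ℝ, ∀ x, ‖iteratedFDeriv ℝ k m x‖ ≤ C)
    (m₀ M : ℝ) (hm₀ : 0 < m₀) (hm : ∀ x, m₀ ≤ m x ∧ m x ≤ M)
    (δ₀ : ℝ) (hδ₀ : 0 < δ₀) (hδ₀M : δ₀ ≤ 1 / (2 * M))
    (r₀ : (Fin n → ℝ) × (Fin n → ℝ) → ℝ)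
    (hr₀ : r₀ = fun p => ∑ i, ∑ j, R p.1 i j * p.2 i * p.2 j) :
    (∀ z ∈ paramZ, ∀ p : (Fin n → ℝ) × (Fin n → ℝ),
      ∃! ρ : ℂ, 0 < ρ.im ∧ ρ ^ 2 + (r₀ p : ℂ) = (m p.1 : ℂ) * z) ∧
    ∀ ρ : ℂ → (Fin n → ℝ) × (Fin n → ℝ) → ℂ,
      (∀ z ∈ paramZ, ∀ p, 0 < (ρ z p).im ∧
        (ρ z p) ^ 2 + (r₀ p : ℂ) = (m p.1 : ℂ) * z) →
      (∀ z ∈ paramZ, ContDiff ℝ (⊤ : ℕ∞) (ρ z)) ∧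
      ∀ a b : ℕ, ∃ C : ℝ, 0 < C ∧
        ∀ z ∈ paramZ, ∀ L : List (Fin n ⊕ Fin n),
          L.countP Sum.isLeft = a → L.countP Sum.isRight = b →
          ∀ p : (Fin n → ℝ) × (Fin n → ℝ),
            (r₀ p ≤ 2 / δ₀ →
              ‖listDeriv (L.map dirOf) (ρ z) p‖ ≤
                C * ‖(ρ z p)‖ ^ ((1 : ℤ) - 2 * (a + b))) ∧
            (1 / δ₀ ≤ r₀ p →
              ‖listDeriv (L.map dirOf) (ρ z) p‖ ≤
                C * ‖(ρ z p)‖ ^ ((1 : ℤ) - b)) := by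
  -- basic positivity facts
  have hM0 : 0 < M := lt_of_lt_of_le hm₀ (le_trans (hm 0).1 (hm 0).2)
  have hmx : ∀ x, 0 < m x := fun x => lt_of_lt_of_le hm₀ (hm x).1
  have hr0nn : ∀ p, 0 ≤ r₀ p := by
    intro p
    rw [hr₀]
    have h := (hell p.1 p.2).1
    have h2 : (0:ℝ) ≤ ∑ i, p.2 i ^2 := Finset.sum_nonneg fun i _ => sq_nonneg _
    nlinarith
  have hrell : ∀ p : Vsp n, C₁ * (∑ i, p.2 i ^ 2) ≤ r₀ p ∧ r₀ p ≤ C₂ * ∑ i, p.2 i ^ 2 := by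
    intro p
    rw [hr₀]
    exact hell p.1 p.2
  -- the function u and the canonical root
  set u : ℂ → Vsp n → ℂ := fun z p => ((r₀ p : ℝ) : ℂ) - (m p.1 : ℂ) * z with hu
  set ρh : ℂ → Vsp n → ℂ := fun z p => posRoot (u z p) with hρh
  have humem : ∀ z ∈ paramZ, ∀ p, u z p ∈ Complex.slitPlane := fun z hz p =>
    slit_mem (hr0nn p) (hmx p.1) (paramZ_props hz).2.2
  have hρsq : ∀ z ∈ paramZ, ∀ p : Vsp n,
      (ρh z p) ^ 2 + (r₀ p : ℂ) = (m p.1 : ℂ) * z := by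
    intro z hz p
    rw [hρh]
    simp only
    rw [posRoot_sq (humem z hz p), hu]
    simp only
    ring
  have hρim : ∀ z ∈ paramZ, ∀ p, 0 < (ρh z p).im := fun z hz p =>
    posRoot_im_pos (humem z hz p)
  have hρabs : ∀ z ∈ paramZ, ∀ p, 0 < ‖(ρh z p)‖ := by
    intro z hz p
    rw [norm_pos_iff]
    intro h0
    have := hρim z hz p
    rw [h0] at this
    simp at this
  have habs_sq : ∀ z ∈ paramZ, ∀ p,
      (‖(ρh z p)‖)^2 = ‖(u z p)‖ := fun z hz p =>
    abs_posRoot_sq (humem z hz p)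
  constructor
  · -- existence and uniqueness
    intro z hz p
    refine ⟨ρh z p, ⟨hρim z hz p, hρsq z hz p⟩, ?_⟩
    intro ρ' hρ'
    exact root_unique hρ'.1 (hρim z hz p)
      (by linear_combination hρ'.2 - hρsq z hz p)
  intro ρ hρspec
  have hρeq : ∀ z ∈ paramZ, ρ z = ρh z := by
    intro z hz
    funext p
    exact root_unique (hρspec z hz p).1 (hρim z hz p)
      (by linear_combination (hρspec z hz p).2 - hρsq z hz p)
  -- smoothness
  have hmC : ContDiff ℝ (⊤ : ℕ∞) (fun q : Vsp n => (m q.1 : ℂ)) :=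
    Complex.ofRealCLM.contDiff.comp (hmsmooth.comp contDiff_fst)
  have hA : ∀ i j, ContDiff ℝ (⊤ : ℕ∞) (fun q : Vsp n => (R q.1 i j : ℂ)) := fun i j =>
    Complex.ofRealCLM.contDiff.comp ((hRsmooth i j).comp contDiff_fst)
  have hB : ∀ i, ContDiff ℝ (⊤ : ℕ∞) (fun q : Vsp n => (q.2 i : ℂ)) := fun i =>
    (Complex.ofRealCLM.comp ((ContinuousLinearMap.proj i).comp
      (ContinuousLinearMap.snd ℝ (Fin n → ℝ) (Fin n → ℝ)))).contDiff
  have hr0cast : (fun q : Vsp n => ((r₀ q : ℝ) : ℂ))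
      = fun q : Vsp n => ∑ i, ∑ j, (R q.1 i j : ℂ) * (q.2 i : ℂ) * (q.2 j : ℂ) := by
    funext q
    rw [hr₀]
    push_cast
    ring
  have hr0smC : ContDiff ℝ (⊤ : ℕ∞) (fun q : Vsp n => ((r₀ q : ℝ) : ℂ)) := by
    rw [hr0cast]
    exact ContDiff.sum fun i _ => ContDiff.sum fun j _ => ((hA i j).mul (hB i)).mul (hB j)
  have husm : ∀ z, ContDiff ℝ (⊤ : ℕ∞) (u z) := fun z =>
    hr0smC.sub (hmC.mul contDiff_const)
  have hρsm : ∀ z ∈ paramZ, ContDiff ℝ (⊤ : ℕ∞) (ρh z) := fun z hz =>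
    contDiff_posRoot_comp (husm z) (humem z hz)
  constructor
  · intro z hz
    rw [hρeq z hz]
    exact hρsm z hz
  -- quantitative bounds: geometric preliminaries
  have hM2 : M ≤ 1/(2*δ₀) := by
    rw [le_div_iff₀ (by positivity)]
    rw [le_div_iff₀ (by positivity)] at hδ₀M
    linarith
  have huup : ∀ z ∈ paramZ, ∀ p, ‖(u z p)‖ ≤ r₀ p + 2*M := by
    intro z hz p
    rw [hu]
    simp only
    calc ‖(((r₀ p : ℝ) : ℂ) - (m p.1 : ℂ) * z)‖
        ≤ ‖((r₀ p : ℝ) : ℂ)‖ + ‖((m p.1 : ℂ) * z)‖ := by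
          rw [sub_eq_add_neg]
          refine le_trans (norm_add_le _ _) ?_
          rw [norm_neg]
      _ ≤ r₀ p + 2*M := by
          rw [norm_mul, Complex.norm_real, Complex.norm_real, Real.norm_eq_abs, Real.norm_eq_abs]
          have h1 : |r₀ p| = r₀ p := abs_of_nonneg (hr0nn p)
          have h2 : |m p.1| = m p.1 := abs_of_nonneg (le_of_lt (hmx p.1))
          have h3 := paramZ_abs_le hz
          have h4 := (hm p.1).2
          have h5 := hmx p.1
          rw [h1, h2]
          nlinarith [norm_nonneg z]
  -- region growth constants
  set K1b : ℝ := max (Real.sqrt (2/δ₀ + 2*M)) 1 with hK1bdef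
  have hK1b1 : 1 ≤ K1b := le_max_right _ _
  have hreg1ρ : ∀ z ∈ paramZ, ∀ p, r₀ p ≤ 2/δ₀ → ‖(ρh z p)‖ ≤ K1b := by
    intro z hz p hreg
    have h1 : (‖(ρh z p)‖)^2 ≤ 2/δ₀ + 2*M := by
      rw [habs_sq z hz p]
      have := huup z hz p
      linarith
    have h2 : ‖(ρh z p)‖ ≤ Real.sqrt (2/δ₀ + 2*M) := by
      apply sqrt_compare (norm_nonneg _) (Real.sqrt_nonneg _)
      rw [Real.sq_sqrt (by positivity)]
      exact h1
    exact le_trans h2 (le_max_left _ _)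
  set Bξ : ℝ := 1 + Real.sqrt (2/(δ₀*C₁)) with hBξdef
  have hBξ1 : 1 ≤ Bξ := by
    rw [hBξdef]
    nlinarith [Real.sqrt_nonneg (2/(δ₀*C₁))]
  have hreg1ξ : ∀ p : Vsp n, r₀ p ≤ 2/δ₀ → 1 + ‖p.2‖ ≤ Bξ := by
    intro p hreg
    have h1 := (hrell p).1
    have h2 : ‖p.2‖^2 ≤ 2/(δ₀*C₁) := by
      have h3 := norm_sq_le_sum p.2
      have h4 : ∑ i, p.2 i ^2 ≤ 2/(δ₀*C₁) := by
        rw [le_div_iff₀ (by positivity)]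
        rw [le_div_iff₀ hδ₀] at hreg
        nlinarith
      linarith
    have h5 : ‖p.2‖ ≤ Real.sqrt (2/(δ₀*C₁)) := by
      apply sqrt_compare (norm_nonneg _) (Real.sqrt_nonneg _)
      rw [Real.sq_sqrt (by positivity)]
      exact h2
    rw [hBξdef]
    linarith
  -- region 2 bounds
  have hreg2 : ∀ z ∈ paramZ, ∀ p, 1/δ₀ ≤ r₀ p →
      r₀ p/2 ≤ (‖(ρh z p)‖)^2 ∧ (‖(ρh z p)‖)^2 ≤ 2 * r₀ p := by
    intro z hz p hreg
    have hrez := (paramZ_props hz).1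
    rw [habs_sq z hz p]
    have hre : (u z p).re = r₀ p - m p.1 * z.re := by
      rw [hu]
      simp [Complex.sub_re, Complex.mul_re]
    have hM3 : M ≤ r₀ p / 2 := by
      have : 1/(2*δ₀) ≤ r₀ p / 2 := by
        rw [div_le_div_iff₀ (by positivity) (by norm_num)]
        rw [div_le_iff₀ hδ₀] at hreg
        nlinarith
      linarith
    constructor
    · have h1 : |(u z p).re| ≤ ‖(u z p)‖ := Complex.abs_re_le_norm _
      have h2 : m p.1 * z.re ≤ M := by
        have h3 : m p.1 * z.re ≤ m p.1 * |z.re| := by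
          have := le_abs_self z.re
          nlinarith [hmx p.1]
        have h4 : m p.1 * |z.re| ≤ M * 1 := by
          apply mul_le_mul (hm p.1).2 hrez (abs_nonneg _) (le_of_lt (lt_of_lt_of_le hm₀ (le_trans (hm p.1).1 (hm p.1).2)))
        nlinarith
      have h5 : r₀ p / 2 ≤ (u z p).re := by
        rw [hre]
        linarith
      calc r₀ p / 2 ≤ (u z p).re := h5
        _ ≤ |(u z p).re| := le_abs_self _
        _ ≤ ‖(u z p)‖ := h1
    · have := huup z hz p
      linarith
  set KB : ℝ := max (Real.sqrt (8*δ₀ + 8/C₁)) (max (Real.sqrt (2*C₂*n)) 1) with hKBdef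
  have hKB1 : 1 ≤ KB := le_trans (le_max_right _ _) (le_max_right _ _)
  have hreg2cmp : ∀ z ∈ paramZ, ∀ p, 1/δ₀ ≤ r₀ p →
      1 + ‖p.2‖ ≤ KB * ‖(ρh z p)‖
      ∧ ‖(ρh z p)‖ ≤ KB * (1 + ‖p.2‖) := by
    intro z hz p hreg
    obtain ⟨hlo, hhi⟩ := hreg2 z hz p hreg
    have hsum1 := norm_sq_le_sum p.2
    have hsum2 := sum_le_norm_sq p.2
    have hell1 := (hrell p).1
    have hell2 := (hrell p).2
    have habsnn := norm_nonneg (ρh z p)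
    have hnormnn := norm_nonneg p.2
    have hsnn : (0:ℝ) ≤ ∑ i, p.2 i ^2 := Finset.sum_nonneg fun i _ => sq_nonneg _
    have hC₂0 : 0 < C₂ := lt_trans hC₁ hC₁₂
    have hn0 : (0:ℝ) < n := by
      have : (1:ℝ) ≤ (n:ℝ) := by exact_mod_cast hn
      linarith
    constructor
    · refine sq_mul_compare (by positivity) (by positivity) (by positivity) habsnn
        (le_max_left _ _) ?_
      exact reg2_lower hδ₀ hC₁ hsnn hnormnn hsum1 (step_a hδ₀ hreg hlo)
        (le_trans hell1 (two_halves hlo))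
    · refine sq_mul_compare (by positivity) (by positivity) habsnn (by positivity)
        (le_trans (le_max_left _ _) (le_max_right _ _)) ?_
      refine reg2_upper hC₂0 hn0 hsnn hnormnn hsum2 ?_
      calc ‖(ρh z p)‖^2 ≤ 2 * r₀ p := hhi
        _ ≤ 2*(C₂* ∑ i, p.2 i ^2) := by
            have := mul_le_mul_of_nonneg_left hell2 (by norm_num : (0:ℝ) ≤ 2)
            linarith
  -- MAIN inductive estimate for the canonical root
  have MAIN : ∀ k : ℕ, ∃ C : ℝ, 0 < C ∧ ∀ z ∈ paramZ, ∀ L : List (Vsp n),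
      (∀ v ∈ L, ∃ d, v = dirOf d) → L.length ≤ k → ∀ p : Vsp n,
      (r₀ p ≤ 2/δ₀ →
        ‖listDeriv L (ρh z) p‖ ≤ C * ‖(ρh z p)‖ ^ ((1:ℤ) - 2*(L.length : ℤ)))
      ∧ (1/δ₀ ≤ r₀ p →
        ‖listDeriv L (ρh z) p‖
          ≤ C * ‖(ρh z p)‖ ^ ((1:ℤ) - (L.countP isXi : ℤ))) := by
    intro k
    induction k with
    | zero =>
      refine ⟨1, one_pos, ?_⟩
      intro z hz L hLmem hlen p
      have hL0 : L = [] := List.length_eq_zero_iff.mp (Nat.le_zero.mp hlen)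
      subst hL0
      have habs := hρabs z hz p
      constructor <;> intro _ <;>
        · simp only [listDeriv_nil, List.length_nil, List.countP_nil, Nat.cast_zero,
            mul_zero, sub_zero, zpow_one, one_mul]
          exact le_rfl
    | succ k IH =>
      obtain ⟨C, hC0, hCk⟩ := IH
      obtain ⟨Cw, hCw0, hCwB⟩ := wBound R hRsmooth hRbdd m hmsmooth hmbdd (k+1)
      set D1 : ℝ := Cw * Bξ^2 * K1b ^ (2*(k+1)) + 2^(k+1) * C^2 with hD1
      set D2 : ℝ := Cw * KB ^ (k+3) + 2^(k+1) * C^2 with hD2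
      have hD1pos : 0 < D1 := by rw [hD1]; positivity
      have hD2pos : 0 < D2 := by rw [hD2]; positivity
      refine ⟨max 1 (max C (max (D1/2) (D2/2))),
        lt_of_lt_of_le one_pos (le_max_left _ _), ?_⟩
      intro z hz L hLmem hlen p
      have habs := hρabs z hz p
      rcases L with _ | ⟨v, T⟩
      · have h1C : (1:ℝ) ≤ max 1 (max C (max (D1/2) (D2/2))) := le_max_left _ _
        constructor <;> intro _ <;>
          · simp only [listDeriv_nil, List.length_nil, List.countP_nil, Nat.cast_zero,
              mul_zero, sub_zero, zpow_one]
            exact le_mul_of_one_le_left (norm_nonneg _) h1C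
      · -- the inductive step proper
        have hρz := hρsm z hz
        set wzf : Vsp n → ℂ := fun q => (m q.1 : ℂ) * z - ((r₀ q : ℝ) : ℂ) with hwzf
        have hsqfun : (fun q => ρh z q * ρh z q) = wzf := by
          funext q
          have h := hρsq z hz q
          rw [hwzf]
          simp only
          linear_combination h
        have key := listDeriv_mul_eq_splits hρz hρz (v::T)
        rw [hsqfun] at key
        obtain ⟨mid, hmid, hmidlen⟩ := splits_decomp v T
        have keyp := congrFun key p
        rw [hmid] at keyp
        simp only [List.map_cons, List.map_append, List.sum_cons, List.sum_append,
          List.map_nil, List.sum_nil, listDeriv_nil, add_zero] at keyp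
        set S : ℂ :=
          (mid.map (fun st => listDeriv st.1 (ρh z) p * listDeriv st.2 (ρh z) p)).sum
          with hSdef
        have hkey2 : listDeriv (v::T) wzf p - S
            = 2 * (ρh z p * listDeriv (v::T) (ρh z) p) := by
          rw [keyp, hSdef]
          ring
        have h2ρ : 2 * ‖(ρh z p)‖ * ‖listDeriv (v::T) (ρh z) p‖
            = ‖listDeriv (v::T) wzf p - S‖ := by
          rw [hkey2, norm_mul, norm_mul]
          have h2 : ‖(2:ℂ)‖ = 2 := by norm_num
          simp only [h2]
          ring
        have hwfun : wzf = (fun q : Vsp n => (m q.1 : ℂ) * z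
            - ∑ i, ∑ j, ((R q.1 i j : ℂ) * (q.2 i : ℂ) * (q.2 j : ℂ))) := by
          funext q
          rw [hwzf]
          simp only
          rw [congrFun hr0cast q]
        have hDw := hCwB z (paramZ_abs_le hz) (v::T) hLmem hlen p
        rw [← hwfun] at hDw
        have hmems : ∀ st ∈ mid, st ∈ splits (v::T) := by
          intro st hst
          rw [hmid]
          simp only [List.mem_cons, List.mem_append]
          tauto
        have hTk : T.length ≤ k := by
          simp only [List.length_cons] at hlen
          omega
        have hmidlen2 : (mid.length : ℝ) ≤ 2^(k+1) := by
          have h1 := splits_len (Vsp n) (v::T)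
          rw [hmid] at h1
          simp only [List.length_cons, List.length_append, List.length_singleton] at h1
          have h2 : mid.length ≤ 2^(k+1) := by
            have h3 : (2:ℕ)^(v::T).length ≤ 2^(k+1) :=
              Nat.pow_le_pow_right (by norm_num) hlen
            simp only [List.length_cons] at h3 h1
            omega
          calc (mid.length : ℝ) ≤ ((2^(k+1) : ℕ) : ℝ) := by exact_mod_cast h2
            _ = 2^(k+1) := by push_cast; ring
        constructor
        · -- region 1
          intro hreg
          have hρK := hreg1ρ z hz p hreg
          have hξB := hreg1ξ p hreg
          have hmidterm : ∀ st ∈ mid,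
              ‖listDeriv st.1 (ρh z) p * listDeriv st.2 (ρh z) p‖
              ≤ C^2 * ‖(ρh z p)‖ ^ ((2:ℤ) - 2*(((v::T).length : ℕ) : ℤ)) := by
            intro st hst
            have hmem2 := splits_mem (hmems st hst)
            have hlen2 := splits_length (hmems st hst)
            have hlb := hmidlen st hst
            have h1 := (hCk z hz st.1 (fun w hw => hLmem w (hmem2.1 w hw))
              (le_trans hlb.1 hTk) p).1 hreg
            have h2 := (hCk z hz st.2 (fun w hw => hLmem w (hmem2.2 w hw))
              (le_trans hlb.2 hTk) p).1 hreg
            rw [norm_mul]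
            calc ‖listDeriv st.1 (ρh z) p‖ * ‖listDeriv st.2 (ρh z) p‖
                ≤ (C * ‖(ρh z p)‖ ^ ((1:ℤ) - 2*(st.1.length : ℤ)))
                  * (C * ‖(ρh z p)‖ ^ ((1:ℤ) - 2*(st.2.length : ℤ))) := by
                  apply mul_le_mul h1 h2 (norm_nonneg _)
                  positivity
              _ = C^2 * ‖(ρh z p)‖ ^ (((1:ℤ) - 2*(st.1.length : ℤ))
                    + ((1:ℤ) - 2*(st.2.length : ℤ))) := by
                  rw [zpow_add₀ (ne_of_gt habs)]
                  ring
              _ = C^2 * ‖(ρh z p)‖ ^ ((2:ℤ) - 2*(((v::T).length : ℕ) : ℤ)) := by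
                  have hexp : ((1:ℤ) - 2*(st.1.length : ℤ)) + ((1:ℤ) - 2*(st.2.length : ℤ))
                      = (2:ℤ) - 2*(((v::T).length : ℕ) : ℤ) := by omega
                  rw [hexp]
          have hSb : ‖S‖ ≤ 2^(k+1) * C^2
              * ‖(ρh z p)‖ ^ ((2:ℤ) - 2*(((v::T).length : ℕ) : ℤ)) := by
            rw [hSdef]
            calc ‖(mid.map (fun st => listDeriv st.1 (ρh z) p
                  * listDeriv st.2 (ρh z) p)).sum‖
                ≤ mid.length * (C^2
                  * ‖(ρh z p)‖ ^ ((2:ℤ) - 2*(((v::T).length : ℕ) : ℤ))) :=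
                  norm_list_map_sum_le _ _ hmidterm
              _ ≤ 2^(k+1) * (C^2
                  * ‖(ρh z p)‖ ^ ((2:ℤ) - 2*(((v::T).length : ℕ) : ℤ))) := by
                  apply mul_le_mul_of_nonneg_right hmidlen2
                  positivity
              _ = 2^(k+1) * C^2
                  * ‖(ρh z p)‖ ^ ((2:ℤ) - 2*(((v::T).length : ℕ) : ℤ)) := by
                  ring
          have hDw1 : ‖listDeriv (v::T) wzf p‖ ≤ Cw * Bξ^2 * K1b^(2*(k+1))
              * ‖(ρh z p)‖ ^ ((2:ℤ) - 2*(((v::T).length : ℕ) : ℤ)) := by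
            have step1 : ‖listDeriv (v::T) wzf p‖ ≤ Cw * Bξ^2 := by
              calc ‖listDeriv (v::T) wzf p‖
                  ≤ Cw * (1 + ‖p.2‖) ^ ((2:ℤ) - ((v::T).countP isXi : ℤ)) := hDw
                _ ≤ Cw * Bξ^2 := by
                    apply mul_le_mul_of_nonneg_left
                      (zpow_le_sq_of_le (one_le_one_add_norm p.2) hξB (by omega))
                      (le_of_lt hCw0)
            have step2 : (1:ℝ) ≤ K1b^(2*(k+1))
                * ‖(ρh z p)‖ ^ ((2:ℤ) - 2*(((v::T).length : ℕ) : ℤ)) := by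
              exact one_le_pow_mul_zpow habs hρK hK1b1
                (show 1 ≤ (v::T).length by simp) hlen
            calc ‖listDeriv (v::T) wzf p‖ ≤ Cw * Bξ^2 := step1
              _ ≤ (Cw * Bξ^2) * (K1b^(2*(k+1))
                  * ‖(ρh z p)‖ ^ ((2:ℤ) - 2*(((v::T).length : ℕ) : ℤ))) :=
                  le_mul_of_one_le_right (by positivity) step2
              _ = Cw * Bξ^2 * K1b^(2*(k+1))
                  * ‖(ρh z p)‖ ^ ((2:ℤ) - 2*(((v::T).length : ℕ) : ℤ)) := by
                  ring
          have hfinal : 2 * ‖(ρh z p)‖ * ‖listDeriv (v::T) (ρh z) p‖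
              ≤ D1 * ‖(ρh z p)‖ ^ ((2:ℤ) - 2*(((v::T).length : ℕ) : ℤ)) := by
            rw [h2ρ]
            calc ‖listDeriv (v::T) wzf p - S‖
                ≤ ‖listDeriv (v::T) wzf p‖ + ‖S‖ := norm_sub_le _ _
              _ ≤ Cw * Bξ^2 * K1b^(2*(k+1))
                  * ‖(ρh z p)‖ ^ ((2:ℤ) - 2*(((v::T).length : ℕ) : ℤ))
                  + 2^(k+1) * C^2
                  * ‖(ρh z p)‖ ^ ((2:ℤ) - 2*(((v::T).length : ℕ) : ℤ)) :=
                  add_le_add hDw1 hSb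
              _ = D1 * ‖(ρh z p)‖ ^ ((2:ℤ) - 2*(((v::T).length : ℕ) : ℤ)) := by
                  rw [hD1]
                  ring
          have hdiv := div_step habs hfinal (norm_nonneg _)
          have hexp : ((2:ℤ) - 2*(((v::T).length : ℕ) : ℤ)) - 1
              = (1:ℤ) - 2*(((v::T).length : ℕ) : ℤ) := by ring
          rw [hexp] at hdiv
          calc ‖listDeriv (v::T) (ρh z) p‖
              ≤ (D1/2) * ‖(ρh z p)‖ ^ ((1:ℤ) - 2*(((v::T).length : ℕ) : ℤ)) :=
                hdiv
            _ ≤ max 1 (max C (max (D1/2) (D2/2)))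
                * ‖(ρh z p)‖ ^ ((1:ℤ) - 2*(((v::T).length : ℕ) : ℤ)) := by
                apply mul_le_mul_of_nonneg_right _ (le_of_lt (zpow_pos habs _))
                exact le_trans (le_trans (le_max_left _ _) (le_max_right _ _))
                  (le_max_right _ _)
        · -- region 2
          intro hreg
          obtain ⟨hcmp1, hcmp2⟩ := hreg2cmp z hz p hreg
          have hcle : (v::T).countP isXi ≤ (v::T).length := List.countP_le_length
          have hmidterm : ∀ st ∈ mid,
              ‖listDeriv st.1 (ρh z) p * listDeriv st.2 (ρh z) p‖
              ≤ C^2 * ‖(ρh z p)‖ ^ ((2:ℤ) - ((v::T).countP isXi : ℤ)) := by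
            intro st hst
            have hmem2 := splits_mem (hmems st hst)
            have hcnt2 := splits_countP isXi (hmems st hst)
            have hlb := hmidlen st hst
            have h1 := (hCk z hz st.1 (fun w hw => hLmem w (hmem2.1 w hw))
              (le_trans hlb.1 hTk) p).2 hreg
            have h2 := (hCk z hz st.2 (fun w hw => hLmem w (hmem2.2 w hw))
              (le_trans hlb.2 hTk) p).2 hreg
            rw [norm_mul]
            calc ‖listDeriv st.1 (ρh z) p‖ * ‖listDeriv st.2 (ρh z) p‖
                ≤ (C * ‖(ρh z p)‖ ^ ((1:ℤ) - (st.1.countP isXi : ℤ)))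
                  * (C * ‖(ρh z p)‖ ^ ((1:ℤ) - (st.2.countP isXi : ℤ))) := by
                  apply mul_le_mul h1 h2 (norm_nonneg _)
                  positivity
              _ = C^2 * ‖(ρh z p)‖ ^ (((1:ℤ) - (st.1.countP isXi : ℤ))
                    + ((1:ℤ) - (st.2.countP isXi : ℤ))) := by
                  rw [zpow_add₀ (ne_of_gt habs)]
                  ring
              _ = C^2 * ‖(ρh z p)‖ ^ ((2:ℤ) - ((v::T).countP isXi : ℤ)) := by
                  have hexp : ((1:ℤ) - (st.1.countP isXi : ℤ))
                      + ((1:ℤ) - (st.2.countP isXi : ℤ))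
                      = (2:ℤ) - ((v::T).countP isXi : ℤ) := by omega
                  rw [hexp]
          have hSb : ‖S‖ ≤ 2^(k+1) * C^2
              * ‖(ρh z p)‖ ^ ((2:ℤ) - ((v::T).countP isXi : ℤ)) := by
            rw [hSdef]
            calc ‖(mid.map (fun st => listDeriv st.1 (ρh z) p
                  * listDeriv st.2 (ρh z) p)).sum‖
                ≤ mid.length * (C^2
                  * ‖(ρh z p)‖ ^ ((2:ℤ) - ((v::T).countP isXi : ℤ))) :=
                  norm_list_map_sum_le _ _ hmidterm
              _ ≤ 2^(k+1) * (C^2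
                  * ‖(ρh z p)‖ ^ ((2:ℤ) - ((v::T).countP isXi : ℤ))) := by
                  apply mul_le_mul_of_nonneg_right hmidlen2
                  positivity
              _ = 2^(k+1) * C^2
                  * ‖(ρh z p)‖ ^ ((2:ℤ) - ((v::T).countP isXi : ℤ)) := by
                  ring
          have hDw2 : ‖listDeriv (v::T) wzf p‖ ≤ Cw * KB^(k+3)
              * ‖(ρh z p)‖ ^ ((2:ℤ) - ((v::T).countP isXi : ℤ)) := by
            calc ‖listDeriv (v::T) wzf p‖
                ≤ Cw * (1 + ‖p.2‖) ^ ((2:ℤ) - ((v::T).countP isXi : ℤ)) := hDw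
              _ ≤ Cw * (KB^(k+3)
                  * ‖(ρh z p)‖ ^ ((2:ℤ) - ((v::T).countP isXi : ℤ))) := by
                  apply mul_le_mul_of_nonneg_left _ (le_of_lt hCw0)
                  apply zpow_le_pow_mul_zpow
                    (lt_of_lt_of_le one_pos (one_le_one_add_norm p.2)) habs hKB1 hcmp1 hcmp2
                  have h1 : ((v::T).countP isXi : ℤ) ≤ ((k:ℤ)+1) := by
                    have := le_trans hcle hlen
                    exact_mod_cast this
                  omega
              _ = Cw * KB^(k+3)
                  * ‖(ρh z p)‖ ^ ((2:ℤ) - ((v::T).countP isXi : ℤ)) := by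
                  ring
          have hfinal : 2 * ‖(ρh z p)‖ * ‖listDeriv (v::T) (ρh z) p‖
              ≤ D2 * ‖(ρh z p)‖ ^ ((2:ℤ) - ((v::T).countP isXi : ℤ)) := by
            rw [h2ρ]
            calc ‖listDeriv (v::T) wzf p - S‖
                ≤ ‖listDeriv (v::T) wzf p‖ + ‖S‖ := norm_sub_le _ _
              _ ≤ Cw * KB^(k+3)
                  * ‖(ρh z p)‖ ^ ((2:ℤ) - ((v::T).countP isXi : ℤ))
                  + 2^(k+1) * C^2
                  * ‖(ρh z p)‖ ^ ((2:ℤ) - ((v::T).countP isXi : ℤ)) :=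
                  add_le_add hDw2 hSb
              _ = D2 * ‖(ρh z p)‖ ^ ((2:ℤ) - ((v::T).countP isXi : ℤ)) := by
                  rw [hD2]
                  ring
          have hdiv := div_step habs hfinal (norm_nonneg _)
          have hexp : ((2:ℤ) - ((v::T).countP isXi : ℤ)) - 1
              = (1:ℤ) - ((v::T).countP isXi : ℤ) := by ring
          rw [hexp] at hdiv
          calc ‖listDeriv (v::T) (ρh z) p‖
              ≤ (D2/2) * ‖(ρh z p)‖ ^ ((1:ℤ) - ((v::T).countP isXi : ℤ)) :=
                hdiv
            _ ≤ max 1 (max C (max (D1/2) (D2/2)))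
                * ‖(ρh z p)‖ ^ ((1:ℤ) - ((v::T).countP isXi : ℤ)) := by
                apply mul_le_mul_of_nonneg_right _ (le_of_lt (zpow_pos habs _))
                exact le_trans (le_trans (le_max_right _ _) (le_max_right _ _))
                  (le_max_right _ _)
  -- conclude
  intro a b
  obtain ⟨C, hC0, hCk⟩ := MAIN (a+b)
  refine ⟨C, hC0, ?_⟩
  intro z hz L hLa hLb p
  have hmem : ∀ v ∈ L.map dirOf, ∃ d, v = dirOf d := by
    intro v hv
    obtain ⟨d, _, rfl⟩ := List.mem_map.mp hv
    exact ⟨d, rfl⟩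
  have hlen : (L.map dirOf).length = a + b := by
    rw [List.length_map, ← hLa, ← hLb]
    exact (countP_left_right L).symm
  have hcount : (L.map dirOf).countP isXi = b := by
    rw [List.countP_map, ← hLb]
    apply List.countP_congr
    intro x _
    cases x with
    | inl i => simp [Function.comp, isXi_dirOf_inl]
    | inr i => simp [Function.comp, isXi_dirOf_inr]
  have hass := hCk z hz (L.map dirOf) hmem (le_of_eq hlen) p
  rw [hρeq z hz]
  constructor
  · intro hreg
    have h := hass.1 hreg
    have hexp : ((1:ℤ) - 2*(((L.map dirOf).length) : ℤ)) = (1:ℤ) - 2*(a+b) := by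
      rw [hlen]
      push_cast
      ring
    rw [hexp] at h
    exact h
  · intro hreg
    have h := hass.2 hreg
    have hexp : ((1:ℤ) - (((L.map dirOf).countP isXi) : ℤ)) = (1:ℤ) - b := by
      rw [hcount]
    rw [hexp] at h
    exact h


end
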